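/- arXiv:2303.02502 — 2 statements merged into one kernel-verified Lean document; each statement's English description precedes it below -/
import Mathlib

section
/- Let 3≤p<4, x∈ℝ^d and 0<R<1, and let φ∈C⁴_b(B_R(x)). Set K₀ := ‖D²φ‖_{L^∞(B_R(x))}. Then there exists a constant C>0, depending only on p, d and ‖φ‖_{C⁴_b(B_R(x))}, such that for every y∈B_{R/2}(0)∖{0} satisfying |∇φ(x)·y| > K₀|y|², one has |D_y[φ](x) − (p−1)|y|^{−p} |∇φ(x)·y|^{p−2} ⟨D²φ(x)y, y⟩| ≤ C Φ(∇φ(x)·(y/|y|)) |y|², where Φ(η) := 1 + (p−3)|η|^{p−4}. -/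
open MeasureTheory Metric Filter
open scoped Topology RealInnerProductSpace MeasureTheory NNReal

noncomputable section

abbrev Euc (d : ℕ) := EuclideanSpace ℝ (Fin d)

/-- `J_p(ξ) = |ξ|^{p-2} ξ`. -/
def Jp (p ξ : ℝ) : ℝ := |ξ| ^ (p - 2) * ξ

/-- Second derivative of `φ` at `x` as a bilinear form: `⟨D²φ(x) v, w⟩`. -/
def D2 {d : ℕ} (φ : Euc d → ℝ) (x v w : Euc d) : ℝ := iteratedFDeriv ℝ 2 φ x ![v, w]

/-- The `p`-Laplacian
`Δ_pφ(x) = |∇φ(x)|^{p−2}Δφ(x) + (p−2)|∇φ(x)|^{p−4}⟨D²φ(x)∇φ(x),∇φ(x)⟩`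
(with the junk-value conventions of `Real.rpow`, this is `0` when `∇φ(x) = 0` and `p > 2`). -/
def pLap {d : ℕ} (p : ℝ) (φ : Euc d → ℝ) (x : Euc d) : ℝ :=
  ‖gradient φ x‖ ^ (p - 2) *
      (∑ i : Fin d, D2 φ x (EuclideanSpace.single i 1) (EuclideanSpace.single i 1)) +
    (p - 2) * ‖gradient φ x‖ ^ (p - 4) * D2 φ x (gradient φ x) (gradient φ x)

/-- `φ ∈ C⁴_b(s)` with `‖φ‖_{C⁴_b(s)} ≤ M`: `φ` is `C⁴` on `s` with all derivatives
up to order `4` bounded by `M`. -/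
def C4bOn {d : ℕ} (φ : Euc d → ℝ) (s : Set (Euc d)) (M : ℝ) : Prop :=
  ContDiffOn ℝ 4 φ s ∧ ∀ k : ℕ, k ≤ 4 → ∀ y ∈ s, ‖iteratedFDerivWithin ℝ k φ s y‖ ≤ M

/-- The surface measure on spheres in `ℝ^d`: the `(d−1)`-dimensional Hausdorff measure. -/
def sphMeas (d : ℕ) : Measure (Euc d) := μH[(d : ℝ) - 1]

/-- Euclidean inner product, as a real number. -/
def innP {d : ℕ} (v w : Euc d) : ℝ := ⟪v, w⟫

/-- `D_y[φ](x) = (J_p(φ(x+y)−φ(x)) + J_p(φ(x−y)−φ(x)))/|y|^p`. -/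
def DyOp {d : ℕ} (p : ℝ) (φ : Euc d → ℝ) (x y : Euc d) : ℝ :=
  (Jp p (φ (x + y) - φ x) + Jp p (φ (x - y) - φ x)) / ‖y‖ ^ p

/-- `inf_{y ∈ s} |∇φ(y)|`. -/
def gradInfOn {d : ℕ} (φ : Euc d → ℝ) (s : Set (Euc d)) : ℝ :=
  sInf ((fun y => ‖gradient φ y‖) '' s)

/-- `‖D²φ‖_{L^∞(s)}`. -/
def d2SupOn {d : ℕ} (φ : Euc d → ℝ) (s : Set (Euc d)) : ℝ :=
  sSup ((fun y => ‖iteratedFDeriv ℝ 2 φ y‖) '' s)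

section Aux
open Set

/-- Comparison lemma: if `|f 0| ≤ B 0` and `|f' t| ≤ B' t` on `[0,1]`, then `|f u| ≤ B u`. -/
lemma comp_core {f f' B B' : ℝ → ℝ}
    (hf : ∀ t ∈ Icc (0:ℝ) 1, HasDerivAt f (f' t) t)
    (hB : ∀ t ∈ Icc (0:ℝ) 1, HasDerivAt B (B' t) t)
    (h0 : |f 0| ≤ B 0) (hd : ∀ t ∈ Icc (0:ℝ) 1, |f' t| ≤ B' t) :
    ∀ u ∈ Icc (0:ℝ) 1, |f u| ≤ B u := by
  intro u hu
  have hsub : Icc (0:ℝ) u ⊆ Icc 0 1 := Icc_subset_Icc le_rfl hu.2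
  have hsub' : Ico (0:ℝ) u ⊆ Icc 0 1 := fun t ht => hsub ⟨ht.1, le_of_lt ht.2⟩
  have := image_norm_le_of_norm_deriv_right_le_deriv_boundary'
    (f := f) (f' := f') (a := 0) (b := u)
    (fun t ht => (hf t (hsub ht)).continuousAt.continuousWithinAt)
    (fun t ht => (hf t (hsub' ht)).hasDerivWithinAt)
    (by simpa using h0)
    (fun t ht => (hB t (hsub ht)).continuousAt.continuousWithinAt)
    (fun t ht => (hB t (hsub' ht)).hasDerivWithinAt)
    (fun t ht => by simpa using hd t (hsub' ht))
  simpa using this ⟨hu.1, le_rfl⟩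

lemma L1 {f f1 : ℝ → ℝ} {C : ℝ}
    (hf : ∀ t ∈ Icc (0:ℝ) 1, HasDerivAt f (f1 t) t)
    (hC : ∀ t ∈ Icc (0:ℝ) 1, |f1 t| ≤ C) :
    ∀ u ∈ Icc (0:ℝ) 1, |f u - f 0| ≤ C * u := by
  refine comp_core (f := fun u => f u - f 0) (f' := f1) (B := fun u => C * u) (B' := fun _ => C)
    (fun t ht => (hf t ht).sub_const _) (fun t ht => ?_) (by simp) hC
  simpa using (hasDerivAt_id t).const_mul C

lemma L2 {f f1 f2 : ℝ → ℝ} {C : ℝ}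
    (hf : ∀ t ∈ Icc (0:ℝ) 1, HasDerivAt f (f1 t) t)
    (hf1 : ∀ t ∈ Icc (0:ℝ) 1, HasDerivAt f1 (f2 t) t)
    (hC : ∀ t ∈ Icc (0:ℝ) 1, |f2 t| ≤ C) :
    ∀ u ∈ Icc (0:ℝ) 1, |f u - f 0 - u * f1 0| ≤ C * u ^ 2 / 2 := by
  refine comp_core (f := fun u => f u - f 0 - u * f1 0) (f' := fun u => f1 u - f1 0)
    (B := fun u => C * u ^ 2 / 2) (B' := fun u => C * u) (fun t ht => ?_) (fun t ht => ?_)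
    (by simp) (fun t ht => by simpa using L1 hf1 hC t ht)
  · have := ((hf t ht).sub_const (f 0)).sub (((hasDerivAt_id t).mul_const (f1 0)))
    exact this.congr_deriv (by ring)
  · have : HasDerivAt (fun u : ℝ => C * u ^ 2 / 2) (C * (2 * t ^ 1) / 2) t :=
      ((hasDerivAt_pow 2 t).const_mul C).div_const 2
    convert this using 1; ring

lemma L3 {f f1 f2 f3 : ℝ → ℝ} {C : ℝ}
    (hf : ∀ t ∈ Icc (0:ℝ) 1, HasDerivAt f (f1 t) t)
    (hf1 : ∀ t ∈ Icc (0:ℝ) 1, HasDerivAt f1 (f2 t) t)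
    (hf2 : ∀ t ∈ Icc (0:ℝ) 1, HasDerivAt f2 (f3 t) t)
    (hC : ∀ t ∈ Icc (0:ℝ) 1, |f3 t| ≤ C) :
    ∀ u ∈ Icc (0:ℝ) 1, |f u - f 0 - u * f1 0 - u ^ 2 * f2 0 / 2| ≤ C * u ^ 3 / 6 := by
  refine comp_core (f := fun u => f u - f 0 - u * f1 0 - u ^ 2 * f2 0 / 2)
    (f' := fun u => f1 u - f1 0 - u * f2 0)
    (B := fun u => C * u ^ 3 / 6) (B' := fun u => C * u ^ 2 / 2) (fun t ht => ?_) (fun t ht => ?_)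
    (by simp) (fun t ht => by simpa using L2 hf1 hf2 hC t ht)
  · have := (((hf t ht).sub_const (f 0)).sub (((hasDerivAt_id t).mul_const (f1 0)))).sub
      (((hasDerivAt_pow 2 t).mul_const (f2 0)).div_const 2)
    exact this.congr_deriv (by ring)
  · have : HasDerivAt (fun u : ℝ => C * u ^ 3 / 6) (C * (3 * t ^ 2) / 6) t :=
      ((hasDerivAt_pow 3 t).const_mul C).div_const 6
    convert this using 1; ring

lemma L4 {f f1 f2 f3 f4 : ℝ → ℝ} {C : ℝ}
    (hf : ∀ t ∈ Icc (0:ℝ) 1, HasDerivAt f (f1 t) t)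
    (hf1 : ∀ t ∈ Icc (0:ℝ) 1, HasDerivAt f1 (f2 t) t)
    (hf2 : ∀ t ∈ Icc (0:ℝ) 1, HasDerivAt f2 (f3 t) t)
    (hf3 : ∀ t ∈ Icc (0:ℝ) 1, HasDerivAt f3 (f4 t) t)
    (hC : ∀ t ∈ Icc (0:ℝ) 1, |f4 t| ≤ C) :
    ∀ u ∈ Icc (0:ℝ) 1,
      |f u - f 0 - u * f1 0 - u ^ 2 * f2 0 / 2 - u ^ 3 * f3 0 / 6| ≤ C * u ^ 4 / 24 := by
  refine comp_core (f := fun u => f u - f 0 - u * f1 0 - u ^ 2 * f2 0 / 2 - u ^ 3 * f3 0 / 6)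
    (f' := fun u => f1 u - f1 0 - u * f2 0 - u ^ 2 * f3 0 / 2)
    (B := fun u => C * u ^ 4 / 24) (B' := fun u => C * u ^ 3 / 6) (fun t ht => ?_) (fun t ht => ?_)
    (by simp) (fun t ht => by simpa using L3 hf1 hf2 hf3 hC t ht)
  · have := ((((hf t ht).sub_const (f 0)).sub (((hasDerivAt_id t).mul_const (f1 0)))).sub
      (((hasDerivAt_pow 2 t).mul_const (f2 0)).div_const 2)).sub
      (((hasDerivAt_pow 3 t).mul_const (f3 0)).div_const 6)
    exact this.congr_deriv (by ring)
  · have : HasDerivAt (fun u : ℝ => C * u ^ 4 / 24) (C * (4 * t ^ 3) / 24) t :=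
      ((hasDerivAt_pow 4 t).const_mul C).div_const 24
    convert this using 1; ring

/-- Taylor expansion of `ξ ↦ ξ^(p-1)` around `a > 0`, valid for `|t| ≤ a/2`. -/
lemma rpowTaylor {p : ℝ} (hp1 : 3 ≤ p) (hp2 : p < 4) {a t : ℝ} (ha : 0 < a) (ht : |t| ≤ a / 2) :
    |(a + t) ^ (p - 1) - a ^ (p - 1) - (p - 1) * a ^ (p - 2) * t
        - (p - 1) * (p - 2) * a ^ (p - 3) * t ^ 2 / 2|
      ≤ (p - 1) * (p - 2) * (p - 3) * (a / 2) ^ (p - 4) * |t| ^ 3 / 6 := by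
  have habs := abs_le.mp ht
  have hpos : ∀ u ∈ Icc (0:ℝ) 1, a / 2 ≤ a + u * t := by
    intro u hu
    nlinarith [hu.1, hu.2, habs.1, habs.2, abs_nonneg t]
  have hne : ∀ u ∈ Icc (0:ℝ) 1, a + u * t ≠ 0 := by
    intro u hu; have := hpos u hu; have : (0:ℝ) < a + u * t := by linarith
    exact ne_of_gt this
  -- derivative chain
  have haff : ∀ u : ℝ, HasDerivAt (fun u : ℝ => a + u * t) t u := by
    intro u
    simpa using ((hasDerivAt_id u).mul_const t).const_add a
  have hD : ∀ (q : ℝ), ∀ u ∈ Icc (0:ℝ) 1,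
      HasDerivAt (fun u : ℝ => (a + u * t) ^ q) (q * (a + u * t) ^ (q - 1) * t) u := by
    intro q u hu
    exact (Real.hasDerivAt_rpow_const (Or.inl (hne u hu))).comp u (haff u)
  set f : ℝ → ℝ := fun u => (a + u * t) ^ (p - 1) with hf_def
  set f1 : ℝ → ℝ := fun u => (p - 1) * (a + u * t) ^ (p - 2) * t with hf1_def
  set f2 : ℝ → ℝ := fun u => (p - 1) * (p - 2) * (a + u * t) ^ (p - 3) * t ^ 2 with hf2_def
  set f3 : ℝ → ℝ := fun u => (p - 1) * (p - 2) * (p - 3) * (a + u * t) ^ (p - 4) * t ^ 3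
    with hf3_def
  have e1 : p - 1 - 1 = p - 2 := by ring
  have e2 : p - 2 - 1 = p - 3 := by ring
  have e3 : p - 3 - 1 = p - 4 := by ring
  have hf : ∀ u ∈ Icc (0:ℝ) 1, HasDerivAt f (f1 u) u := by
    intro u hu; have := hD (p - 1) u hu; rw [e1] at this; exact this
  have hf1 : ∀ u ∈ Icc (0:ℝ) 1, HasDerivAt f1 (f2 u) u := by
    intro u hu
    have := ((hD (p - 2) u hu).const_mul (p - 1)).mul_const t
    rw [e2] at this
    exact this.congr_deriv (by ring)
  have hf2 : ∀ u ∈ Icc (0:ℝ) 1, HasDerivAt f2 (f3 u) u := by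
    intro u hu
    have := ((hD (p - 3) u hu).const_mul ((p - 1) * (p - 2))).mul_const (t ^ 2)
    rw [e3] at this
    exact this.congr_deriv (by ring)
  have hC : ∀ u ∈ Icc (0:ℝ) 1,
      |f3 u| ≤ (p - 1) * (p - 2) * (p - 3) * (a / 2) ^ (p - 4) * |t| ^ 3 := by
    intro u hu
    have h1 : (0:ℝ) < a / 2 := by positivity
    have h2 : (a + u * t) ^ (p - 4) ≤ (a / 2) ^ (p - 4) :=
      Real.rpow_le_rpow_of_nonpos h1 (hpos u hu) (by linarith)
    have h3 : (0:ℝ) ≤ (a + u * t) ^ (p - 4) := Real.rpow_nonneg (by linarith [hpos u hu, h1]) _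
    rw [hf3_def, abs_mul, abs_mul, abs_mul, abs_mul, abs_pow]
    rw [abs_of_nonneg (by linarith : (0:ℝ) ≤ p - 1), abs_of_nonneg (by linarith : (0:ℝ) ≤ p - 2),
      abs_of_nonneg (by linarith : (0:ℝ) ≤ p - 3), abs_of_nonneg h3]
    have h4 := abs_nonneg t
    have h5 : (0:ℝ) ≤ (p-1)*(p-2)*(p-3) := mul_nonneg (mul_nonneg (by linarith) (by linarith)) (by linarith)
    calc (p-1)*(p-2)*(p-3)*(a+u*t)^(p-4)*|t|^3 ≤ (p-1)*(p-2)*(p-3)*((a/2)^(p-4))*|t|^3 := by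
          have : (0:ℝ) ≤ |t|^3 := by positivity
          nlinarith [mul_le_mul_of_nonneg_left h2 h5]
      _ = _ := by ring
  have := L3 hf hf1 hf2 hC 1 ⟨zero_le_one, le_rfl⟩
  simp only [hf_def, hf1_def, hf2_def] at this
  norm_num at this
  convert this using 2 <;> ring

/-- The `k`-th directional difference function along `y`. -/
def gg {d : ℕ} (φ : Euc d → ℝ) (x y : Euc d) (k : ℕ) (s : ℝ) : ℝ :=
  iteratedFDeriv ℝ k φ (x + s • y) (fun _ : Fin k => y)

lemma hasDerivAt_gg {d : ℕ} {φ : Euc d → ℝ} {x : Euc d} {R : ℝ}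
    (hφ : ContDiffOn ℝ 4 φ (ball x R)) {y : Euc d} {k : ℕ} (hk : k < 4) {u : ℝ}
    (hu : x + u • y ∈ ball x R) :
    HasDerivAt (gg φ x y k) (gg φ x y (k + 1) u) u := by
  have hopen : IsOpen (ball x (R : ℝ)) := isOpen_ball
  have hdiff : DifferentiableAt ℝ (iteratedFDeriv ℝ k φ) (x + u • y) := by
    have h1 : DifferentiableOn ℝ (iteratedFDerivWithin ℝ k φ (ball x R)) (ball x R) :=
      hφ.differentiableOn_iteratedFDerivWithin (by exact_mod_cast hk) hopen.uniqueDiffOn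
    have h2 : DifferentiableWithinAt ℝ (iteratedFDeriv ℝ k φ) (ball x R) (x + u • y) := by
      refine (h1 _ hu).congr (fun z hz => ?_) ?_
      · exact (iteratedFDerivWithin_of_isOpen k hopen hz).symm
      · exact (iteratedFDerivWithin_of_isOpen k hopen hu).symm
    exact h2.differentiableAt (hopen.mem_nhds hu)
  have haff : HasDerivAt (fun s : ℝ => x + s • y) y u := by
    simpa using ((hasDerivAt_id u).smul_const y).const_add x
  have hcomp : HasDerivAt (fun s : ℝ => iteratedFDeriv ℝ k φ (x + s • y))
      (fderiv ℝ (iteratedFDeriv ℝ k φ) (x + u • y) y) u :=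
    hdiff.hasFDerivAt.comp_hasDerivAt u haff
  have happ := (ContinuousMultilinearMap.apply ℝ (fun _ : Fin k => Euc d) ℝ
      (fun _ => y)).hasFDerivAt.comp_hasDerivAt u hcomp
  have : (ContinuousMultilinearMap.apply ℝ (fun _ : Fin k => Euc d) ℝ (fun _ => y))
      (fderiv ℝ (iteratedFDeriv ℝ k φ) (x + u • y) y) = gg φ x y (k + 1) u := by
    show fderiv ℝ (iteratedFDeriv ℝ k φ) (x + u • y) y (fun _ => y) = _
    rw [gg, iteratedFDeriv_succ_apply_left]
    rfl
  rw [this] at happ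
  exact happ

lemma gg_bound {d : ℕ} {φ : Euc d → ℝ} {x : Euc d} {R M : ℝ}
    (hφ : ∀ k : ℕ, k ≤ 4 → ∀ z ∈ ball x R, ‖iteratedFDerivWithin ℝ k φ (ball x R) z‖ ≤ M)
    {y : Euc d} {k : ℕ} (hk : k ≤ 4) {u : ℝ} (hu : x + u • y ∈ ball x R) :
    |gg φ x y k u| ≤ M * ‖y‖ ^ k := by
  have h1 : ‖iteratedFDeriv ℝ k φ (x + u • y)‖ ≤ M := by
    rw [← iteratedFDerivWithin_of_isOpen k isOpen_ball hu]
    exact hφ k hk _ hu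
  calc |gg φ x y k u| ≤ ‖iteratedFDeriv ℝ k φ (x + u • y)‖ * ∏ _i : Fin k, ‖y‖ :=
        (iteratedFDeriv ℝ k φ (x + u • y)).le_opNorm _
    _ = ‖iteratedFDeriv ℝ k φ (x + u • y)‖ * ‖y‖ ^ k := by
        rw [Finset.prod_const, Finset.card_univ, Fintype.card_fin]
    _ ≤ M * ‖y‖ ^ k := by
        have : (0:ℝ) ≤ ‖y‖ ^ k := by positivity
        exact mul_le_mul_of_nonneg_right h1 this

lemma gg_abs_le {d : ℕ} (φ : Euc d → ℝ) (x y : Euc d) (k : ℕ) (u : ℝ) {B : ℝ}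
    (hB : ‖iteratedFDeriv ℝ k φ (x + u • y)‖ ≤ B) : |gg φ x y k u| ≤ B * ‖y‖ ^ k := by
  calc |gg φ x y k u| ≤ ‖iteratedFDeriv ℝ k φ (x + u • y)‖ * ∏ _i : Fin k, ‖y‖ :=
        (iteratedFDeriv ℝ k φ (x + u • y)).le_opNorm _
    _ = ‖iteratedFDeriv ℝ k φ (x + u • y)‖ * ‖y‖ ^ k := by
        rw [Finset.prod_const, Finset.card_univ, Fintype.card_fin]
    _ ≤ B * ‖y‖ ^ k := by
        have : (0:ℝ) ≤ ‖y‖ ^ k := by positivity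
        exact mul_le_mul_of_nonneg_right hB this

set_option maxHeartbeats 2000000 in
lemma key_est {p M n K a b tp tm : ℝ} (hp1 : 3 ≤ p) (hp2 : p < 4)
    (hn : 0 < n) (hK0 : 0 ≤ K) (hKM : K ≤ M)
    (ha : 0 < a) (haM : a ≤ M * n) (hKa : K * n ^ 2 < a)
    (htp : |tp| ≤ K * n ^ 2 / 2) (htm : |tm| ≤ K * n ^ 2 / 2)
    (hsum : |tp + tm - b| ≤ M * n ^ 4 / 12) (hdiff : |tp - tm| ≤ M * n ^ 3) :
    |(a + tp) ^ (p - 1) - (a - tm) ^ (p - 1) - (p - 1) * a ^ (p - 2) * b| ≤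
      ((p - 1) * M ^ (p - 1) / 12 + (p - 1) * (p - 2) * M ^ (p - 1) / 2
          + (p - 1) * (p - 2) * M ^ 3 / 6 + 1) *
        (1 + (p - 3) * (a / n) ^ (p - 4)) * (n ^ p * n ^ 2) := by
  have hM0 : 0 < M := by
    by_contra h
    push_neg at h
    have : M * n ≤ 0 := mul_nonpos_of_nonpos_of_nonneg h hn.le
    linarith
  have hKa2 : K * n ^ 2 / 2 ≤ a / 2 := by linarith
  have htp' : |tp| ≤ a / 2 := htp.trans hKa2
  have htm' : |-tm| ≤ a / 2 := by rw [abs_neg]; exact htm.trans hKa2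
  have T1 := rpowTaylor hp1 hp2 ha htp'
  have T2 := rpowTaylor hp1 hp2 ha htm'
  have e : a + -tm = a - tm := by ring
  rw [e] at T2
  have hc1p : (0:ℝ) < p - 1 := by linarith
  have hc2p : (0:ℝ) < (p - 1) * (p - 2) := by nlinarith
  have hc3p : (0:ℝ) ≤ (p - 1) * (p - 2) * (p - 3) := by nlinarith
  -- nonnegativity facts
  have ha2 : 0 ≤ a ^ (p - 2) := Real.rpow_nonneg ha.le _
  have ha3 : 0 ≤ a ^ (p - 3) := Real.rpow_nonneg ha.le _
  have ha4 : 0 ≤ (a / 2) ^ (p - 4) := Real.rpow_nonneg (by linarith) _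
  have hE : 0 ≤ (a / n) ^ (p - 4) := Real.rpow_nonneg (by positivity) _
  have hQ : 0 ≤ n ^ p * n ^ 2 := by positivity
  have hA : 0 ≤ M ^ (p - 1) := Real.rpow_nonneg hM0.le _
  -- rpow product rewrites
  have hMM2 : M ^ (p - 2) * M = M ^ (p - 1) := by
    rw [← Real.rpow_add_one hM0.ne']; congr 1; ring
  have hMM3 : M ^ (p - 3) * M * M = M ^ (p - 1) := by
    rw [← Real.rpow_add_one hM0.ne', ← Real.rpow_add_one hM0.ne']; congr 1; ring
  have hnn2 : n ^ (p - 2) * n ^ (4:ℕ) = n ^ p * n ^ (2:ℕ) := by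
    rw [← Real.rpow_natCast n 4, ← Real.rpow_natCast n 2, ← Real.rpow_add hn,
      ← Real.rpow_add hn]; congr 1 <;> ring
  have hnn3 : n ^ (p - 3) * (n ^ (3:ℕ) * n ^ (2:ℕ)) = n ^ p * n ^ (2:ℕ) := by
    rw [← Real.rpow_natCast n 3, ← Real.rpow_natCast n 2, ← Real.rpow_add hn,
      ← Real.rpow_add hn, ← Real.rpow_add hn]; congr 1 <;> ring
  have hnn4 : n ^ (p - 4) * n ^ (6:ℕ) = n ^ p * n ^ (2:ℕ) := by
    rw [← Real.rpow_natCast n 6, ← Real.rpow_natCast n 2, ← Real.rpow_add hn,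
      ← Real.rpow_add hn]; congr 1 <;> ring
  -- bounds on rpowers of a
  have hap2 : a ^ (p - 2) ≤ M ^ (p - 2) * n ^ (p - 2) := by
    rw [← Real.mul_rpow hM0.le hn.le]
    exact Real.rpow_le_rpow ha.le haM (by linarith)
  have hap3 : a ^ (p - 3) ≤ M ^ (p - 3) * n ^ (p - 3) := by
    rw [← Real.mul_rpow hM0.le hn.le]
    exact Real.rpow_le_rpow ha.le haM (by linarith)
  have hsplit : (a / 2) ^ (p - 4) ≤ 2 * ((a / n) ^ (p - 4) * n ^ (p - 4)) := by
    have h1 : (a / 2) ^ (p - 4) = (a / n) ^ (p - 4) * (n / 2) ^ (p - 4) := by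
      rw [← Real.mul_rpow (by positivity) (by positivity : (0:ℝ) ≤ n / 2)]
      congr 1
      field_simp
    have h2 : (n / 2) ^ (p - 4) = n ^ (p - 4) * (2:ℝ) ^ (4 - p) := by
      rw [div_eq_mul_inv, Real.mul_rpow hn.le (by positivity), ← Real.rpow_neg_one (2:ℝ),
        ← Real.rpow_mul (by norm_num : (0:ℝ) ≤ 2)]
      ring_nf
    have h3 : (2:ℝ) ^ (4 - p) ≤ 2 := by
      have := Real.rpow_le_rpow_of_exponent_le (by norm_num : (1:ℝ) ≤ 2) (by linarith : 4 - p ≤ 1)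
      rwa [Real.rpow_one] at this
    have h4 : (0:ℝ) ≤ n ^ (p - 4) := Real.rpow_nonneg hn.le _
    rw [h1, h2]
    calc (a / n) ^ (p - 4) * (n ^ (p - 4) * (2:ℝ) ^ (4 - p))
        ≤ (a / n) ^ (p - 4) * (n ^ (p - 4) * 2) := by gcongr
      _ = 2 * ((a / n) ^ (p - 4) * n ^ (p - 4)) := by ring
  -- decomposition
  set X := (a + tp) ^ (p - 1) - a ^ (p - 1) - (p - 1) * a ^ (p - 2) * tp
      - (p - 1) * (p - 2) * a ^ (p - 3) * tp ^ 2 / 2 with hX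
  set Y := (a - tm) ^ (p - 1) - a ^ (p - 1) - (p - 1) * a ^ (p - 2) * (-tm)
      - (p - 1) * (p - 2) * a ^ (p - 3) * (-tm) ^ 2 / 2 with hY
  have hid : (a + tp) ^ (p - 1) - (a - tm) ^ (p - 1) - (p - 1) * a ^ (p - 2) * b
      = X - Y + (p - 1) * a ^ (p - 2) * (tp + tm - b)
        + (p - 1) * (p - 2) * a ^ (p - 3) * ((tp - tm) * (tp + tm)) / 2 := by
    rw [hX, hY]; ring
  -- term bounds
  have hsum2 : |tp + tm| ≤ M * n ^ 2 := by
    have := abs_add_le tp tm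
    have h5 : K * n ^ 2 ≤ M * n ^ 2 := mul_le_mul_of_nonneg_right hKM (sq_nonneg n)
    linarith
  have ht1 : |(p - 1) * a ^ (p - 2) * (tp + tm - b)|
      ≤ (p - 1) * M ^ (p - 1) / 12 * (n ^ p * n ^ 2) := by
    rw [abs_mul, abs_mul, abs_of_pos hc1p, abs_of_nonneg ha2]
    calc (p - 1) * a ^ (p - 2) * |tp + tm - b|
        ≤ (p - 1) * (M ^ (p - 2) * n ^ (p - 2)) * (M * n ^ 4 / 12) := by
          gcongr
      _ = (p - 1) * M ^ (p - 1) / 12 * (n ^ p * n ^ 2) := by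
          rw [← hMM2, ← hnn2]; ring
  have ht2 : |(p - 1) * (p - 2) * a ^ (p - 3) * ((tp - tm) * (tp + tm)) / 2|
      ≤ (p - 1) * (p - 2) * M ^ (p - 1) / 2 * (n ^ p * n ^ 2) := by
    have habs : |(p - 1) * (p - 2) * a ^ (p - 3) * ((tp - tm) * (tp + tm)) / 2|
        = (p - 1) * (p - 2) * a ^ (p - 3) * (|tp - tm| * |tp + tm|) / 2 := by
      rw [abs_div, abs_mul, abs_mul, abs_mul, abs_mul,
        abs_of_pos (show (0:ℝ) < p - 1 by linarith),
        abs_of_pos (show (0:ℝ) < p - 2 by linarith), abs_of_nonneg ha3,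
        abs_of_nonneg (show (0:ℝ) ≤ 2 by norm_num)]
    rw [habs]
    calc (p - 1) * (p - 2) * a ^ (p - 3) * (|tp - tm| * |tp + tm|) / 2
        ≤ (p - 1) * (p - 2) * (M ^ (p - 3) * n ^ (p - 3)) * ((M * n ^ 3) * (M * n ^ 2)) / 2 := by
          gcongr
      _ = (p - 1) * (p - 2) * M ^ (p - 1) / 2 * (n ^ p * n ^ 2) := by
          rw [← hMM3, ← hnn3]; ring
  have htcube : ∀ t : ℝ, |t| ≤ K * n ^ 2 / 2 → |t| ≤ M * n ^ 2 / 2 := fun t ht =>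
    ht.trans (by have := mul_le_mul_of_nonneg_right hKM (sq_nonneg n); linarith)
  have hXb : |X| ≤ (p - 1) * (p - 2) * (p - 3) * (a / 2) ^ (p - 4) * (M * n ^ 2 / 2) ^ 3 / 6 := by
    refine T1.trans ?_
    gcongr
    exact htcube tp htp
  have hYb : |Y| ≤ (p - 1) * (p - 2) * (p - 3) * (a / 2) ^ (p - 4) * (M * n ^ 2 / 2) ^ 3 / 6 := by
    refine T2.trans ?_
    gcongr
    exact htcube (-tm) (by rwa [abs_neg])
  have hXY : |X| + |Y| ≤ (p - 1) * (p - 2) * M ^ 3 / 12 * ((p - 3) * (a / n) ^ (p - 4)) * (n ^ p * n ^ 2) := by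
    have hstep : (p - 1) * (p - 2) * (p - 3) * (a / 2) ^ (p - 4) * (M * n ^ 2 / 2) ^ 3 / 6
        ≤ (p - 1) * (p - 2) * (p - 3) * (2 * ((a / n) ^ (p - 4) * n ^ (p - 4))) * (M * n ^ 2 / 2) ^ 3 / 6 := by
      gcongr
    have heq : (p - 1) * (p - 2) * (p - 3) * (2 * ((a / n) ^ (p - 4) * n ^ (p - 4))) * (M * n ^ 2 / 2) ^ 3 / 6
        = (p - 1) * (p - 2) * M ^ 3 / 24 * ((p - 3) * (a / n) ^ (p - 4)) * (n ^ (p - 4) * n ^ 6) := by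
      ring
    rw [heq, hnn4] at hstep
    have := add_le_add (hXb.trans hstep) (hYb.trans hstep)
    linarith
  -- final combination
  rw [hid]
  have htri : |X - Y + (p - 1) * a ^ (p - 2) * (tp + tm - b)
        + (p - 1) * (p - 2) * a ^ (p - 3) * ((tp - tm) * (tp + tm)) / 2|
      ≤ |X| + |Y| + |(p - 1) * a ^ (p - 2) * (tp + tm - b)|
        + |(p - 1) * (p - 2) * a ^ (p - 3) * ((tp - tm) * (tp + tm)) / 2| := by
    calc |X - Y + (p - 1) * a ^ (p - 2) * (tp + tm - b)
          + (p - 1) * (p - 2) * a ^ (p - 3) * ((tp - tm) * (tp + tm)) / 2|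
        ≤ |X - Y + (p - 1) * a ^ (p - 2) * (tp + tm - b)|
          + |(p - 1) * (p - 2) * a ^ (p - 3) * ((tp - tm) * (tp + tm)) / 2| := abs_add_le _ _
      _ ≤ |X - Y| + |(p - 1) * a ^ (p - 2) * (tp + tm - b)|
          + |(p - 1) * (p - 2) * a ^ (p - 3) * ((tp - tm) * (tp + tm)) / 2| := by
          have := abs_add_le (X - Y) ((p - 1) * a ^ (p - 2) * (tp + tm - b))
          linarith
      _ ≤ _ := by
          have := abs_sub X Y
          linarith [abs_sub_abs_le_abs_sub X Y, abs_sub X Y]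
  have hM3 : (0:ℝ) ≤ (p - 1) * (p - 2) * M ^ 3 / 6 := by positivity
  have hc2A : (0:ℝ) ≤ (p - 1) * (p - 2) * M ^ (p - 1) / 2 := by positivity
  have h1A : (0:ℝ) ≤ (p - 1) * M ^ (p - 1) / 12 := by positivity
  have hEQ : 0 ≤ (p - 3) * (a / n) ^ (p - 4) := mul_nonneg (by linarith) hE
  have hfin : |X| + |Y| + |(p - 1) * a ^ (p - 2) * (tp + tm - b)|
        + |(p - 1) * (p - 2) * a ^ (p - 3) * ((tp - tm) * (tp + tm)) / 2|
      ≤ ((p - 1) * M ^ (p - 1) / 12 + (p - 1) * (p - 2) * M ^ (p - 1) / 2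
          + (p - 1) * (p - 2) * M ^ 3 / 6 + 1) *
        (1 + (p - 3) * (a / n) ^ (p - 4)) * (n ^ p * n ^ 2) := by
    have expand : ((p - 1) * M ^ (p - 1) / 12 + (p - 1) * (p - 2) * M ^ (p - 1) / 2
          + (p - 1) * (p - 2) * M ^ 3 / 6 + 1) *
        (1 + (p - 3) * (a / n) ^ (p - 4)) * (n ^ p * n ^ 2)
        = ((p - 1) * M ^ (p - 1) / 12 + (p - 1) * (p - 2) * M ^ (p - 1) / 2
            + (p - 1) * (p - 2) * M ^ 3 / 6 + 1) * (n ^ p * n ^ 2)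
          + ((p - 1) * M ^ (p - 1) / 12 + (p - 1) * (p - 2) * M ^ (p - 1) / 2
            + (p - 1) * (p - 2) * M ^ 3 / 6 + 1) * ((p - 3) * (a / n) ^ (p - 4)) * (n ^ p * n ^ 2) := by
      ring
    rw [expand]
    have b1 : |(p - 1) * a ^ (p - 2) * (tp + tm - b)|
          + |(p - 1) * (p - 2) * a ^ (p - 3) * ((tp - tm) * (tp + tm)) / 2|
        ≤ ((p - 1) * M ^ (p - 1) / 12 + (p - 1) * (p - 2) * M ^ (p - 1) / 2
            + (p - 1) * (p - 2) * M ^ 3 / 6 + 1) * (n ^ p * n ^ 2) := by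
      calc |(p - 1) * a ^ (p - 2) * (tp + tm - b)|
            + |(p - 1) * (p - 2) * a ^ (p - 3) * ((tp - tm) * (tp + tm)) / 2|
          ≤ (p - 1) * M ^ (p - 1) / 12 * (n ^ p * n ^ 2)
            + (p - 1) * (p - 2) * M ^ (p - 1) / 2 * (n ^ p * n ^ 2) := add_le_add ht1 ht2
        _ = ((p - 1) * M ^ (p - 1) / 12 + (p - 1) * (p - 2) * M ^ (p - 1) / 2) * (n ^ p * n ^ 2) := by
            ring
        _ ≤ _ := mul_le_mul_of_nonneg_right (by linarith) hQ
    have b2 : |X| + |Y|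
        ≤ ((p - 1) * M ^ (p - 1) / 12 + (p - 1) * (p - 2) * M ^ (p - 1) / 2
            + (p - 1) * (p - 2) * M ^ 3 / 6 + 1) * ((p - 3) * (a / n) ^ (p - 4)) * (n ^ p * n ^ 2) := by
      refine hXY.trans ?_
      apply mul_le_mul_of_nonneg_right _ hQ
      apply mul_le_mul_of_nonneg_right _ hEQ
      linarith
    linarith
  exact htri.trans hfin

lemma Jp_of_pos {p ξ : ℝ} (hξ : 0 < ξ) : Jp p ξ = ξ ^ (p - 1) := by
  rw [Jp, abs_of_pos hξ, show p - 1 = p - 2 + 1 by ring, Real.rpow_add_one hξ.ne']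

lemma Jp_neg_arg (p ξ : ℝ) : Jp p (-ξ) = -Jp p ξ := by
  rw [Jp, Jp, abs_neg]; ring

set_option maxHeartbeats 1000000 in
lemma main_ineq {d : ℕ} {p : ℝ} (hp1 : 3 ≤ p) (hp2 : p < 4) {x : Euc d} {R : ℝ}
    (hR0 : 0 < R) (hR1 : R < 1) {φ : Euc d → ℝ} {M : ℝ} (hφ : C4bOn φ (ball x R) M)
    {y : Euc d} (hy : y ∈ ball (0 : Euc d) (R / 2)) (hy0 : y ≠ 0)
    (hcond : d2SupOn φ (ball x R) * ‖y‖ ^ 2 < innP (gradient φ x) y) :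
    |DyOp p φ x y - (p - 1) / ‖y‖ ^ p * |innP (gradient φ x) y| ^ (p - 2) * D2 φ x y y| ≤
      ((p - 1) * M ^ (p - 1) / 12 + (p - 1) * (p - 2) * M ^ (p - 1) / 2
          + (p - 1) * (p - 2) * M ^ 3 / 6 + 1) *
        (1 + (p - 3) * |innP (gradient φ x) (‖y‖⁻¹ • y)| ^ (p - 4)) * ‖y‖ ^ 2 := by
  have hn : (0:ℝ) < ‖y‖ := norm_pos_iff.mpr hy0
  set n := ‖y‖ with hn_def
  set K := d2SupOn φ (ball x R) with hK_def
  set a := innP (gradient φ x) y with ha_def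
  have hx_mem : x ∈ ball x R := mem_ball_self hR0
  have hbdd : ∀ k : ℕ, k ≤ 4 → ∀ z ∈ ball x R, ‖iteratedFDeriv ℝ k φ z‖ ≤ M := by
    intro k hk z hz
    rw [← iteratedFDerivWithin_of_isOpen k isOpen_ball hz]
    exact hφ.2 k hk z hz
  have hbddA : BddAbove ((fun z => ‖iteratedFDeriv ℝ 2 φ z‖) '' ball x R) := by
    refine ⟨M, ?_⟩
    rintro v ⟨z, hz, rfl⟩
    exact hbdd 2 (by norm_num) z hz
  have hKz : ∀ z ∈ ball x R, ‖iteratedFDeriv ℝ 2 φ z‖ ≤ K :=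
    fun z hz => le_csSup hbddA ⟨z, hz, rfl⟩
  have hK0 : 0 ≤ K := le_trans (norm_nonneg _) (hKz x hx_mem)
  have hKM : K ≤ M := by
    rw [hK_def, d2SupOn]
    refine csSup_le ⟨_, ⟨x, hx_mem, rfl⟩⟩ ?_
    rintro v ⟨z, hz, rfl⟩
    exact hbdd 2 (by norm_num) z hz
  have hM0 : 0 ≤ M := le_trans (norm_nonneg _) (hbdd 2 (by norm_num) x hx_mem)
  have ha : 0 < a := lt_of_le_of_lt (by positivity) hcond
  have hyR : n < R / 2 := by
    rw [hn_def]; simpa [mem_ball_zero_iff] using hy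
  have hn1 : n ≤ 1 := by linarith
  have hmem : ∀ u ∈ Icc (-1:ℝ) 1, x + u • y ∈ ball x R := by
    intro u hu
    rw [mem_ball, dist_eq_norm, add_sub_cancel_left, norm_smul, Real.norm_eq_abs]
    have h1 : |u| ≤ 1 := abs_le.mpr ⟨hu.1, hu.2⟩
    nlinarith [abs_nonneg u, hn.le]
  have hsub : Icc (0:ℝ) 1 ⊆ Icc (-1:ℝ) 1 := Icc_subset_Icc (by norm_num) le_rfl
  have hmemneg : ∀ u ∈ Icc (0:ℝ) 1, x + (-u) • y ∈ ball x R := by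
    intro u hu
    exact hmem (-u) ⟨by linarith [hu.2], by linarith [hu.1]⟩
  have hD : ∀ k, k < 4 → ∀ u ∈ Icc (0:ℝ) 1, HasDerivAt (gg φ x y k) (gg φ x y (k + 1) u) u :=
    fun k hk u hu => hasDerivAt_gg hφ.1 hk (hmem u (hsub hu))
  have hDm : ∀ k, k < 4 → ∀ u ∈ Icc (0:ℝ) 1,
      HasDerivAt (fun v => gg φ x y k (-v)) (-gg φ x y (k + 1) (-u)) u := by
    intro k hk u hu
    have h := (hasDerivAt_gg hφ.1 hk (hmemneg u hu)).comp u (hasDerivAt_neg u)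
    exact h.congr_deriv (by simp)
  -- bounds
  have hggK : ∀ u ∈ Icc (-1:ℝ) 1, |gg φ x y 2 u| ≤ K * n ^ 2 :=
    fun u hu => gg_abs_le φ x y 2 u (hKz _ (hmem u hu))
  have hggM : ∀ k : ℕ, k ≤ 4 → ∀ u ∈ Icc (-1:ℝ) 1, |gg φ x y k u| ≤ M * n ^ k :=
    fun k hk u hu => gg_abs_le φ x y k u (hbdd k hk _ (hmem u hu))
  -- Taylor estimates, positive direction
  have P2 := L2 (hD 0 (by norm_num)) (hD 1 (by norm_num))
    (fun t ht => hggK t (hsub ht)) 1 ⟨zero_le_one, le_rfl⟩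
  have P4 := L4 (hD 0 (by norm_num)) (hD 1 (by norm_num)) (hD 2 (by norm_num))
    (hD 3 (by norm_num)) (fun t ht => hggM 4 le_rfl t (hsub ht)) 1 ⟨zero_le_one, le_rfl⟩
  -- negative direction: chain gg0(-·), -gg1(-·), gg2(-·), -gg3(-·), gg4(-·)
  have hDm1 : ∀ u ∈ Icc (0:ℝ) 1, HasDerivAt (fun v => -gg φ x y 1 (-v)) (gg φ x y 2 (-u)) u :=
    fun u hu => (hDm 1 (by norm_num) u hu).neg.congr_deriv (by simp)
  have hDm3 : ∀ u ∈ Icc (0:ℝ) 1, HasDerivAt (fun v => -gg φ x y 3 (-v)) (gg φ x y 4 (-u)) u :=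
    fun u hu => (hDm 3 (by norm_num) u hu).neg.congr_deriv (by simp)
  have hmemIcc : ∀ u ∈ Icc (0:ℝ) 1, -u ∈ Icc (-1:ℝ) 1 :=
    fun u hu => ⟨by linarith [hu.2], by linarith [hu.1]⟩
  have M2 := L2 (hDm 0 (by norm_num)) hDm1
    (fun t ht => hggK (-t) (hmemIcc t ht)) 1 ⟨zero_le_one, le_rfl⟩
  have M4 := L4 (hDm 0 (by norm_num)) hDm1 (fun u hu => hDm 2 (by norm_num) u hu) hDm3
    (fun t ht => hggM 4 le_rfl (-t) (hmemIcc t ht)) 1 ⟨zero_le_one, le_rfl⟩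
  simp only [neg_zero, one_pow, mul_one, one_mul] at P2 P4 M2 M4
  -- name the quantities
  set tp := gg φ x y 0 1 - gg φ x y 0 0 - gg φ x y 1 0 with htp_def
  set tm := gg φ x y 0 (-1) - gg φ x y 0 0 + gg φ x y 1 0 with htm_def
  set b := gg φ x y 2 0 with hb_def
  set c := gg φ x y 3 0 with hc_def
  have htp : |tp| ≤ K * n ^ 2 / 2 := by
    have : gg φ x y 0 1 - gg φ x y 0 0 - gg φ x y 1 0 = tp := rfl
    linarith [P2]
  have htm : |tm| ≤ K * n ^ 2 / 2 := by
    have e : gg φ x y 0 (-1) - gg φ x y 0 0 - -gg φ x y 1 0 = tm := by rw [htm_def]; ring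
    rw [e] at M2
    linarith [M2]
  have hP4' : |tp - b / 2 - c / 6| ≤ M * n ^ 4 / 24 := by
    have e : gg φ x y 0 1 - gg φ x y 0 0 - gg φ x y 1 0 - b / 2 - c / 6
        = tp - b / 2 - c / 6 := by rw [htp_def]
    rw [← e]; convert P4 using 2 <;> ring
  have hM4' : |tm - b / 2 + c / 6| ≤ M * n ^ 4 / 24 := by
    have e : gg φ x y 0 (-1) - gg φ x y 0 0 - -gg φ x y 1 0 - b / 2 - -c / 6
        = tm - b / 2 + c / 6 := by rw [htm_def]; ring
    rw [← e]; convert M4 using 2 <;> ring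
  have hcM : |c| ≤ M * n ^ 3 := hggM 3 (by norm_num) 0 ⟨by norm_num, by norm_num⟩
  have hn4 : M * n ^ 4 ≤ M * n ^ 3 :=
    mul_le_mul_of_nonneg_left (pow_le_pow_of_le_one hn.le hn1 (by norm_num)) hM0
  have hMn3 : (0:ℝ) ≤ M * n ^ 3 := mul_nonneg hM0 (by positivity)
  have hsum : |tp + tm - b| ≤ M * n ^ 4 / 12 := by
    have := abs_add_le (tp - b / 2 - c / 6) (tm - b / 2 + c / 6)
    have e : tp - b / 2 - c / 6 + (tm - b / 2 + c / 6) = tp + tm - b := by ring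
    rw [e] at this
    linarith
  have hdiff : |tp - tm| ≤ M * n ^ 3 := by
    have h1 := abs_sub (tp - b / 2 - c / 6) (tm - b / 2 + c / 6)
    have e : tp - b / 2 - c / 6 - (tm - b / 2 + c / 6) = tp - tm - c / 3 := by ring
    have h2 : |tp - tm - c / 3| ≤ M * n ^ 4 / 12 := by
      have := abs_sub_abs_le_abs_sub (tp - b / 2 - c / 6) (tm - b / 2 + c / 6)
      have h3 := abs_sub (tp - b/2 - c/6) (tm - b/2 + c/6)
      calc |tp - tm - c / 3| = |(tp - b/2 - c/6) - (tm - b/2 + c/6)| := by rw [← e]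
        _ ≤ |tp - b/2 - c/6| + |tm - b/2 + c/6| := abs_sub _ _
        _ ≤ M * n ^ 4 / 12 := by linarith
    have h4 : |tp - tm| ≤ |tp - tm - c / 3| + |c / 3| := by
      have := abs_add_le (tp - tm - c / 3) (c / 3)
      simpa using this
    have h5 : |c / 3| ≤ M * n ^ 3 / 3 := by rw [abs_div]; simp; linarith [hcM]
    linarith
  -- identify values
  have hg10 : gg φ x y 1 0 = a := by
    rw [gg, ha_def, innP, zero_smul, add_zero]
    rw [show (iteratedFDeriv ℝ 1 φ x fun _ => y) = fderiv ℝ φ x y from by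
      rw [iteratedFDeriv_one_apply]]
    rw [gradient]
    exact (InnerProductSpace.toDual_symm_apply (𝕜 := ℝ) (E := Euc d)
      (y := fderiv ℝ φ x) (x := y)).symm
  have haM : a ≤ M * n := by
    have h1 : |gg φ x y 1 0| ≤ M * n ^ 1 :=
      hggM 1 (by norm_num) 0 ⟨by norm_num, by norm_num⟩
    rw [← hg10]
    calc gg φ x y 1 0 ≤ |gg φ x y 1 0| := le_abs_self _
      _ ≤ M * n ^ 1 := h1
      _ = M * n := by ring
  have hg01 : gg φ x y 0 1 = φ (x + y) := by
    rw [gg, iteratedFDeriv_zero_apply, one_smul]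
  have hg00 : gg φ x y 0 0 = φ x := by
    rw [gg, iteratedFDeriv_zero_apply, zero_smul, add_zero]
  have hg0m : gg φ x y 0 (-1) = φ (x - y) := by
    rw [gg, iteratedFDeriv_zero_apply, neg_smul, one_smul, ← sub_eq_add_neg]
  have hg20 : gg φ x y 2 0 = D2 φ x y y := by
    rw [gg, zero_smul, add_zero, D2]
    congr 1
    funext i
    fin_cases i <;> rfl
  have hAp : φ (x + y) - φ x = a + tp := by rw [htp_def, hg01, hg00, hg10]; ring
  have hAm : φ (x - y) - φ x = -(a - tm) := by rw [htm_def, hg0m, hg00, hg10]; ring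
  have hhalf : K * n ^ 2 / 2 ≤ a / 2 := by linarith
  have hpos1 : 0 < a + tp := by
    have := abs_le.mp (htp.trans hhalf); linarith
  have hpos2 : 0 < a - tm := by
    have := abs_le.mp (htm.trans hhalf); linarith
  have hDy : DyOp p φ x y = ((a + tp) ^ (p - 1) - (a - tm) ^ (p - 1)) / n ^ p := by
    rw [DyOp, hAp, hAm, Jp_neg_arg, Jp_of_pos hpos1, Jp_of_pos hpos2]; ring
  have hnp : (0:ℝ) < n ^ p := Real.rpow_pos_of_pos hn p
  have KE := key_est hp1 hp2 hn hK0 hKM ha haM hcond htp htm hsum hdiff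
  have habsa : |a| = a := abs_of_pos ha
  have hinner : |innP (gradient φ x) (n⁻¹ • y)| = a / n := by
    rw [innP, real_inner_smul_right]
    rw [show (inner ℝ (gradient φ x) y : ℝ) = a from by rw [ha_def]; rfl]
    rw [abs_of_nonneg (by positivity), inv_mul_eq_div]
  rw [habsa, hinner, ← hg20]
  have hexpr : DyOp p φ x y - (p - 1) / n ^ p * a ^ (p - 2) * gg φ x y 2 0
      = ((a + tp) ^ (p - 1) - (a - tm) ^ (p - 1) - (p - 1) * a ^ (p - 2) * gg φ x y 2 0)
        / n ^ p := by
    rw [hDy]; field_simp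
  rw [hexpr, abs_div, abs_of_pos hnp]
  calc |(a + tp) ^ (p - 1) - (a - tm) ^ (p - 1) - (p - 1) * a ^ (p - 2) * gg φ x y 2 0| / n ^ p
      ≤ ((p - 1) * M ^ (p - 1) / 12 + (p - 1) * (p - 2) * M ^ (p - 1) / 2
          + (p - 1) * (p - 2) * M ^ 3 / 6 + 1) *
        (1 + (p - 3) * (a / n) ^ (p - 4)) * (n ^ p * n ^ 2) / n ^ p := by
        gcongr
    _ = ((p - 1) * M ^ (p - 1) / 12 + (p - 1) * (p - 2) * M ^ (p - 1) / 2
          + (p - 1) * (p - 2) * M ^ 3 / 6 + 1) *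
        (1 + (p - 3) * (a / n) ^ (p - 4)) * n ^ 2 := by
        field_simp

theorem statement13' {d : ℕ} (p : ℝ) (hp1 : 3 ≤ p) (hp2 : p < 4) (x : Euc d) (R : ℝ)
    (hR0 : 0 < R) (hR1 : R < 1) (φ : Euc d → ℝ) (M : ℝ) (hφ : C4bOn φ (ball x R) M) :
    ∃ C > 0, ∀ y : Euc d, y ∈ ball (0 : Euc d) (R / 2) → y ≠ 0 →
      d2SupOn φ (ball x R) * ‖y‖ ^ 2 < |innP (gradient φ x) y| →
      |DyOp p φ x y -
          (p - 1) / ‖y‖ ^ p * |innP (gradient φ x) y| ^ (p - 2) * D2 φ x y y| ≤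
        C * (1 + (p - 3) * |innP (gradient φ x) (‖y‖⁻¹ • y)| ^ (p - 4)) * ‖y‖ ^ 2 := by
  have hM0 : 0 ≤ M := by
    have := hφ.2 0 (by norm_num) x (mem_ball_self hR0)
    exact le_trans (norm_nonneg _) this
  set C := (p - 1) * M ^ (p - 1) / 12 + (p - 1) * (p - 2) * M ^ (p - 1) / 2
      + (p - 1) * (p - 2) * M ^ 3 / 6 + 1 with hC_def
  have hA : 0 ≤ M ^ (p - 1) := Real.rpow_nonneg hM0 _
  have hM3 : 0 ≤ M ^ 3 := by positivity
  have h1 : 0 ≤ (p - 1) * M ^ (p - 1) / 12 := by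
    apply div_nonneg _ (by norm_num); exact mul_nonneg (by linarith) hA
  have h2 : 0 ≤ (p - 1) * (p - 2) * M ^ (p - 1) / 2 := by
    apply div_nonneg _ (by norm_num)
    exact mul_nonneg (mul_nonneg (by linarith) (by linarith)) hA
  have h3 : 0 ≤ (p - 1) * (p - 2) * M ^ 3 / 6 := by
    apply div_nonneg _ (by norm_num)
    exact mul_nonneg (mul_nonneg (by linarith) (by linarith)) hM3
  have hCpos : 0 < C := by rw [hC_def]; linarith
  refine ⟨C, hCpos, ?_⟩
  intro y hy hy0 hcond
  have hK0 : 0 ≤ d2SupOn φ (ball x R) * ‖y‖ ^ 2 := by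
    have hx_mem : x ∈ ball x R := mem_ball_self hR0
    have hbdd : ∀ z ∈ ball x R, ‖iteratedFDeriv ℝ 2 φ z‖ ≤ M := by
      intro z hz
      rw [← iteratedFDerivWithin_of_isOpen 2 isOpen_ball hz]
      exact hφ.2 2 (by norm_num) z hz
    have hbddA : BddAbove ((fun z => ‖iteratedFDeriv ℝ 2 φ z‖) '' ball x R) := by
      refine ⟨M, ?_⟩; rintro v ⟨z, hz, rfl⟩; exact hbdd z hz
    have : (0:ℝ) ≤ d2SupOn φ (ball x R) :=
      le_trans (norm_nonneg _) (le_csSup hbddA ⟨x, hx_mem, rfl⟩)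
    positivity
  have ha_ne : innP (gradient φ x) y ≠ 0 := by
    intro h
    rw [h, abs_zero] at hcond
    linarith
  rcases lt_or_gt_of_ne ha_ne with hneg | hpos
  · -- apply main_ineq to -y
    have hy' : -y ∈ ball (0 : Euc d) (R / 2) := by
      simpa [mem_ball_zero_iff] using hy
    have hy0' : -y ≠ 0 := neg_ne_zero.mpr hy0
    have hinn : innP (gradient φ x) (-y) = -innP (gradient φ x) y := by
      rw [innP, innP, inner_neg_right]
    have hcond' : d2SupOn φ (ball x R) * ‖-y‖ ^ 2 < innP (gradient φ x) (-y) := by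
      rw [norm_neg, hinn]
      rwa [abs_of_neg hneg] at hcond
    have H := main_ineq hp1 hp2 hR0 hR1 hφ hy' hy0' hcond'
    -- transfer back
    have e1 : DyOp p φ x (-y) = DyOp p φ x y := by
      rw [DyOp, DyOp, norm_neg, sub_neg_eq_add, ← sub_eq_add_neg, add_comm (Jp p (φ (x - y) - φ x))]
    have e2 : |innP (gradient φ x) (-y)| = |innP (gradient φ x) y| := by
      rw [hinn, abs_neg]
    have e3 : D2 φ x (-y) (-y) = D2 φ x y y := by
      rw [D2, D2]
      have eq1 : ![-y, -y] = fun i => (-1 : ℝ) • (![y, y] i) := by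
        funext i; fin_cases i <;> simp
      rw [eq1, (iteratedFDeriv ℝ 2 φ x).map_smul_univ (fun _ => (-1:ℝ)) ![y, y]]
      simp
    have e4 : |innP (gradient φ x) (‖-y‖⁻¹ • -y)| = |innP (gradient φ x) (‖y‖⁻¹ • y)| := by
      rw [norm_neg, smul_neg, innP, innP, inner_neg_right, abs_neg]
    rw [e1, e2, e3, e4, norm_neg] at H
    exact H
  · have hcond' : d2SupOn φ (ball x R) * ‖y‖ ^ 2 < innP (gradient φ x) y := by
      rwa [abs_of_pos hpos] at hcond
    exact main_ineq hp1 hp2 hR0 hR1 hφ hy hy0 hcond'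

end Aux

/-- Refined quadratic expansion of `D_y[φ](x)` for `3 ≤ p < 4` in the
region `|∇φ(x)·y| > K₀|y|²`, with `Φ(η) = 1 + (p−3)|η|^{p−4}`. -/
theorem statement13 {d : ℕ} (p : ℝ) (hp1 : 3 ≤ p) (hp2 : p < 4) (x : Euc d) (R : ℝ)
    (hR0 : 0 < R) (hR1 : R < 1) (φ : Euc d → ℝ) (M : ℝ) (hφ : C4bOn φ (ball x R) M) :
    ∃ C > 0, ∀ y : Euc d, y ∈ ball (0 : Euc d) (R / 2) → y ≠ 0 →
      d2SupOn φ (ball x R) * ‖y‖ ^ 2 < |innP (gradient φ x) y| →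
      |DyOp p φ x y -
          (p - 1) / ‖y‖ ^ p * |innP (gradient φ x) y| ^ (p - 2) * D2 φ x y y| ≤
        C * (1 + (p - 3) * |innP (gradient φ x) (‖y‖⁻¹ • y)| ^ (p - 4)) * ‖y‖ ^ 2 :=
  statement13' p hp1 hp2 x R hR0 hR1 φ M hφ
end
end

section
/- Let 2<p<3, β∈(0,p−2), x∈ℝ^d and 0<R<1, and let φ∈C⁴_b(B_R(x)). Set K₀ := ‖D²φ‖_{L^∞(B_R(x))}. Then there exists a constant C>0, depending only on p, β, d and ‖φ‖_{C⁴_b(B_R(x))}, such that for every y∈B_{R/2}(0)∖{0} satisfying |∇φ(x)·y| > K₀|y|², one has |D_y[φ](x) − (p−1)|y|^{−p} |∇φ(x)·y|^{p−2} ⟨D²φ(x)y, y⟩| ≤ C Φ(∇φ(x)·(y/|y|)) |y|^{1+β}, where Φ(η) := 1 + |η|^{p−3} + |η|^{p−3−β}. -/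
open MeasureTheory Metric Filter
open scoped Topology RealInnerProductSpace MeasureTheory NNReal

noncomputable section

/-! ### Auxiliary 1-D lemmas -/

open Set





def Jq (p ξ : ℝ) : ℝ := (p - 1) * |ξ| ^ (p - 2)

def Jpp (p ξ : ℝ) : ℝ := (p - 1) * (p - 2) * (|ξ| ^ (p - 3) * (SignType.sign ξ : ℝ))

lemma hasDerivAt_abs_rpow' (c : ℝ) {ξ : ℝ} (h : ξ ≠ 0) :
    HasDerivAt (fun x : ℝ => |x| ^ c) (c * |ξ| ^ (c - 1) * (SignType.sign ξ : ℝ)) ξ := by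
  have h1 : HasDerivAt (fun x : ℝ => x ^ c) (c * |ξ| ^ (c - 1)) |ξ| :=
    Real.hasDerivAt_rpow_const (Or.inl (abs_ne_zero.2 h))
  exact h1.comp ξ (hasDerivAt_abs h)

lemma sgnMulSelf {ξ : ℝ} (h : ξ ≠ 0) : (SignType.sign ξ : ℝ) * ξ = |ξ| := by
  rcases h.lt_or_gt with hl | hl
  · simp [sign_neg hl, abs_of_neg hl]
  · simp [sign_pos hl, abs_of_pos hl]

lemma absSgn {ξ : ℝ} (h : ξ ≠ 0) : |(SignType.sign ξ : ℝ)| = 1 := by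
  rcases h.lt_or_gt with hl | hl
  · simp [sign_neg hl]
  · simp [sign_pos hl]

lemma hasDerivAt_Jp (p : ℝ) {ξ : ℝ} (h : ξ ≠ 0) : HasDerivAt (Jp p) (Jq p ξ) ξ := by
  have habs : |ξ| ≠ 0 := abs_ne_zero.2 h
  have h1 := (hasDerivAt_abs_rpow' (p - 2) h).mul (hasDerivAt_id ξ)
  have he : ((p-2) * |ξ| ^ (p - 2 - 1) * (SignType.sign ξ : ℝ)) * ξ + |ξ| ^ (p-2) * 1
      = Jq p ξ := by
    rw [mul_assoc, mul_assoc, sgnMulSelf h, ← Real.rpow_add_one habs,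
      show p - 2 - 1 + 1 = p - 2 by ring]
    unfold Jq
    ring
  rw [← he]
  exact h1

lemma hasDerivAt_Jq (p : ℝ) {ξ : ℝ} (h : ξ ≠ 0) : HasDerivAt (Jq p) (Jpp p ξ) ξ := by
  have h1 := (hasDerivAt_abs_rpow' (p - 2) h).const_mul (p - 1)
  have he : (p - 1) * ((p-2) * |ξ| ^ (p - 2 - 1) * (SignType.sign ξ : ℝ)) = Jpp p ξ := by
    unfold Jpp
    rw [show p - 2 - 1 = p - 3 by ring]
    ring
  rw [← he]
  exact h1

lemma abs_Jpp_le (p : ℝ) {ξ : ℝ} (h : ξ ≠ 0) (hp1 : 2 < p) (hp2 : p < 3) :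
    |Jpp p ξ| ≤ (p - 1) * (p - 2) * |ξ| ^ (p - 3) := by
  unfold Jpp
  rw [abs_mul, abs_mul, abs_mul, absSgn h, mul_one,
    abs_of_pos (by linarith : (0:ℝ) < p - 1), abs_of_pos (by linarith : (0:ℝ) < p - 2),
    abs_of_nonneg (Real.rpow_nonneg (abs_nonneg ξ) _)]

lemma abs_Jp_le (p : ℝ) (hp1 : 2 < p) {ξ c : ℝ} (hc : |ξ| ≤ c) : |Jp p ξ| ≤ c ^ (p - 1) := by
  unfold Jp
  rcases eq_or_ne ξ 0 with rfl | h
  · simp [Real.rpow_nonneg (le_trans (abs_nonneg (0:ℝ)) hc)]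
  · rw [abs_mul, abs_of_nonneg (Real.rpow_nonneg (abs_nonneg ξ) _),
      show |ξ| ^ (p-2) * |ξ| = |ξ| ^ (p - 1) by
        rw [← Real.rpow_add_one (abs_ne_zero.2 h), show p - 2 + 1 = p - 1 by ring]]
    exact Real.rpow_le_rpow (abs_nonneg ξ) hc (by linarith)

lemma Jp_neg (p ξ : ℝ) : Jp p (-ξ) = - Jp p ξ := by simp [Jp]


lemma sgn_eq {a s : ℝ} (ha : a ≠ 0) (hs : |s| ≤ |a| / 2) :
    SignType.sign (a + s) = SignType.sign a ∧ |a| / 2 ≤ |a + s| ∧ a + s ≠ 0 := by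
  have h1 := abs_le.1 hs
  rcases ha.lt_or_gt with hl | hl
  · have h2 : a + s < 0 := by rw [abs_of_neg hl] at h1; cases h1; linarith
    refine ⟨by rw [sign_neg h2, sign_neg hl], ?_, by linarith⟩
    rw [abs_of_neg hl, abs_of_neg h2]; rw [abs_of_neg hl] at h1; cases h1; linarith
  · have h2 : 0 < a + s := by rw [abs_of_pos hl] at h1; cases h1; linarith
    refine ⟨by rw [sign_pos h2, sign_pos hl], ?_, by linarith⟩
    rw [abs_of_pos hl, abs_of_pos h2]; rw [abs_of_pos hl] at h1; cases h1; linarith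

/-- The `β`-Hölder-type modulus bound for `Jpp` near `a`. -/
lemma jpp_diff {p β : ℝ} (hp1 : 2 < p) (hp2 : p < 3) (hβ1 : 0 < β) (hβ2 : β ≤ 1)
    {a s : ℝ} (ha : a ≠ 0) (hs : |s| ≤ |a| / 2) :
    |Jpp p (a + s) - Jpp p a| ≤
      (p - 1) * (p - 2) * 2 ^ (4 - p) * (|a| ^ (p - 3 - β) * |s| ^ β) := by
  obtain ⟨hsgn, hge, hne⟩ := sgn_eq ha hs
  have hA : (0:ℝ) < |a| := abs_pos.2 ha
  have hA2 : (0:ℝ) < |a| / 2 := by linarith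
  set w := |a + s| with hw
  have hwpos : (0:ℝ) < w := abs_pos.2 hne
  -- |w^(p-3) - |a|^(p-3)| ≤ 2 * (|a|/2)^(p-3) * min 1 (|s|/|a|)
  have hD1 : |w ^ (p-3) - |a| ^ (p-3)| ≤ 2 * (|a|/2) ^ (p-3) := by
    have b1 : w ^ (p-3) ≤ (|a|/2) ^ (p-3) :=
      Real.rpow_le_rpow_of_nonpos hA2 hge (by linarith)
    have b2 : |a| ^ (p-3) ≤ (|a|/2) ^ (p-3) :=
      Real.rpow_le_rpow_of_nonpos hA2 (by linarith) (by linarith)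
    have b3 : (0:ℝ) ≤ w ^ (p-3) := Real.rpow_nonneg hwpos.le _
    have b4 : (0:ℝ) ≤ |a| ^ (p-3) := Real.rpow_nonneg hA.le _
    rw [abs_sub_le_iff]; constructor <;> nlinarith
  have hD2 : |w ^ (p-3) - |a| ^ (p-3)| ≤ 2 * (|a|/2) ^ (p-3) * (|s| / |a|) := by
    have hmvt := Convex.norm_image_sub_le_of_norm_hasDerivWithin_le
      (f := fun r : ℝ => r ^ (p-3)) (f' := fun r : ℝ => (p-3) * r ^ (p-3-1))
      (s := Ici (|a|/2))
      (fun r hr => (Real.hasDerivAt_rpow_const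
        (Or.inl (by rw [mem_Ici] at hr; linarith : r ≠ 0))).hasDerivWithinAt)
      (C := (3-p) * (|a|/2) ^ (p-4))
      (fun r hr => by
        rw [mem_Ici] at hr
        rw [Real.norm_eq_abs, abs_mul, abs_of_nonpos (by linarith : p - 3 ≤ 0),
          abs_of_nonneg (Real.rpow_nonneg (by linarith) _)]
        have : r ^ (p-3-1) ≤ (|a|/2) ^ (p-4) := by
          rw [show p - 3 - 1 = p - 4 by ring]
          exact Real.rpow_le_rpow_of_nonpos hA2 hr (by linarith)
        nlinarith)
      (convex_Ici _) (mem_Ici.2 (by linarith : |a|/2 ≤ |a|)) (mem_Ici.2 hge)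
    rw [Real.norm_eq_abs, Real.norm_eq_abs] at hmvt
    have hws : abs (w - abs a) ≤ |s| := by
      have h := abs_abs_sub_abs_le_abs_sub (a + s) a
      simpa using h
    have hrw : (|a|/2) ^ (p-4) = 2 * (|a|/2) ^ (p-3) / |a| := by
      rw [show p - 4 = p - 3 - 1 by ring, Real.rpow_sub_one (ne_of_gt hA2)]
      field_simp
    have h3p : (0:ℝ) < 3 - p := by linarith
    have hpos : (0:ℝ) ≤ (|a|/2) ^ (p-3) := Real.rpow_nonneg hA2.le _
    calc |w ^ (p-3) - |a| ^ (p-3)| ≤ (3-p) * (|a|/2) ^ (p-4) * abs (w - abs a) := hmvt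
      _ ≤ 1 * (|a|/2) ^ (p-4) * |s| := by
          have h4 : (0:ℝ) ≤ (|a|/2) ^ (p-4) := Real.rpow_nonneg hA2.le _
          have h5 : (3-p) * (|a|/2) ^ (p-4) ≤ 1 * (|a|/2) ^ (p-4) :=
            mul_le_mul_of_nonneg_right (by linarith) h4
          exact mul_le_mul h5 hws (abs_nonneg _) (by nlinarith)
      _ = 2 * (|a|/2) ^ (p-3) * (|s| / |a|) := by rw [hrw]; field_simp
  have hmin : min (1:ℝ) (|s|/|a|) ≤ (|s|/|a|) ^ β := by
    rcases le_or_gt (|s|/|a|) 1 with hle | hlt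
    · rcases eq_or_lt_of_le (div_nonneg (abs_nonneg s) hA.le) with h0 | h0
      · rw [← h0]; simp [Real.zero_rpow (ne_of_gt hβ1)]
      · calc min (1:ℝ) (|s|/|a|) ≤ |s|/|a| := min_le_right _ _
          _ = (|s|/|a|) ^ (1:ℝ) := (Real.rpow_one _).symm
          _ ≤ (|s|/|a|) ^ β := Real.rpow_le_rpow_of_exponent_ge h0 hle hβ2
    · calc min (1:ℝ) (|s|/|a|) ≤ 1 := min_le_left _ _
        _ ≤ (|s|/|a|) ^ β := Real.one_le_rpow hlt.le hβ1.le
  have hDn : |w ^ (p-3) - |a| ^ (p-3)| ≤ 2 * (|a|/2) ^ (p-3) * ((|s|/|a|) ^ β) := by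
    have hc : (0:ℝ) ≤ 2 * (|a|/2) ^ (p-3) := by positivity
    rcases le_total (1:ℝ) (|s|/|a|) with h | h
    · refine hD1.trans ?_
      have : min (1:ℝ) (|s|/|a|) = 1 := min_eq_left h
      nlinarith [hmin]
    · refine hD2.trans ?_
      have : min (1:ℝ) (|s|/|a|) = |s|/|a| := min_eq_right h
      nlinarith [hmin]
  -- now convert
  have hkey : Jpp p (a + s) - Jpp p a
      = (p-1) * (p-2) * ((w ^ (p-3) - |a| ^ (p-3)) * (SignType.sign a : ℝ)) := by
    unfold Jpp; rw [hsgn]; ring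
  have habs1 : |(SignType.sign a : ℝ)| = 1 := by
    rcases ha.lt_or_gt with hl | hl
    · simp [sign_neg hl]
    · simp [sign_pos hl]
  have hfinal : 2 * (|a|/2) ^ (p-3) * ((|s|/|a|) ^ β)
      = 2 ^ (4-p) * (|a| ^ (p - 3 - β) * |s| ^ β) := by
    have e1 : ((2:ℝ)) ^ (4 - p) = 2 * 2 ^ (-(p - 3)) := by
      rw [show (4:ℝ) - p = 1 + -(p - 3) by ring, Real.rpow_add two_pos, Real.rpow_one]
    have e2 : (|a|/2) ^ (p-3) = |a| ^ (p-3) * ((2:ℝ) ^ (p-3))⁻¹ := by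
      rw [Real.div_rpow hA.le two_pos.le, div_eq_mul_inv]
    have e3 : (|s|/|a|) ^ β = |s| ^ β * (|a| ^ β)⁻¹ := by
      rw [Real.div_rpow (abs_nonneg s) hA.le, div_eq_mul_inv]
    have e4 : |a| ^ (p-3-β) = |a| ^ (p-3) * (|a| ^ β)⁻¹ := by
      rw [show p-3-β = (p-3) + (-β) by ring, Real.rpow_add hA, Real.rpow_neg hA.le]
    have e5 : ((2:ℝ)) ^ (-(p-3)) = ((2:ℝ) ^ (p-3))⁻¹ := Real.rpow_neg two_pos.le _
    rw [e1, e2, e3, e4, e5]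
    ring
  rw [hkey, abs_mul, abs_mul, abs_mul, habs1, mul_one,
    abs_of_pos (by linarith : (0:ℝ) < p - 1), abs_of_pos (by linarith : (0:ℝ) < p - 2)]
  have h2 := mul_le_mul_of_nonneg_left hDn
    (show (0:ℝ) ≤ (p-1)*(p-2) by nlinarith)
  rw [hfinal] at h2
  nlinarith [h2]

lemma jp_taylor2 {p β : ℝ} (hp1 : 2 < p) (hp2 : p < 3) (hβ1 : 0 < β) (hβ2 : β ≤ 1)
    {a u : ℝ} (ha : a ≠ 0) (hu : |u| ≤ |a| / 2) :
    |Jp p (a + u) - Jp p a - Jq p a * u - Jpp p a * u ^ 2 / 2|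
      ≤ (p - 1) * (p - 2) * 2 ^ (4 - p) * (|a| ^ (p - 3 - β) * |u| ^ β) * u ^ 2 := by
  set CJ := (p - 1) * (p - 2) * (2:ℝ) ^ ((4:ℝ) - p) with hCJ
  have hCJ0 : 0 ≤ CJ := by
    have h : (0:ℝ) < (2:ℝ) ^ ((4:ℝ) - p) := Real.rpow_pos_of_pos two_pos _
    rw [hCJ]
    exact mul_nonneg (mul_nonneg (by linarith) (by linarith)) h.le
  set K := CJ * (|a| ^ (p - 3 - β) * |u| ^ β) with hK
  have hK0 : 0 ≤ K :=
    mul_nonneg hCJ0 (mul_nonneg (Real.rpow_nonneg (abs_nonneg a) _)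
      (Real.rpow_nonneg (abs_nonneg u) _))
  have hmem : ∀ s ∈ uIcc (0:ℝ) u, |s| ≤ |u| ∧ |s| ≤ |a| / 2 ∧ a + s ≠ 0 := by
    intro s hs
    have h1 : |s| ≤ |u| := by
      rcases mem_uIcc.1 hs with ⟨h1, h2⟩ | ⟨h1, h2⟩
      · rw [abs_of_nonneg h1]; exact le_trans h2 (le_abs_self u)
      · rw [abs_of_nonpos h2]; exact le_trans (by linarith [neg_abs_le u, le_abs_self u] :
          -s ≤ -u) (neg_le_abs u)
    have h2 : |s| ≤ |a| / 2 := h1.trans hu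
    exact ⟨h1, h2, (sgn_eq ha h2).2.2⟩
  -- first order: G
  have hGd : ∀ s ∈ uIcc (0:ℝ) u, HasDerivWithinAt
      (fun s => Jq p (a + s) - Jq p a - Jpp p a * s)
      (Jpp p (a + s) - Jpp p a) (uIcc (0:ℝ) u) s := by
    intro s hs
    obtain ⟨-, -, hne⟩ := hmem s hs
    have hline : HasDerivAt (fun s : ℝ => a + s) 1 s := by
      simpa using (hasDerivAt_id s).const_add a
    have h := (((hasDerivAt_Jq p hne).comp s hline).sub_const (Jq p a)).sub
      ((hasDerivAt_id s).const_mul (Jpp p a))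
    have he : Jpp p (a + s) * 1 - Jpp p a * 1 = Jpp p (a + s) - Jpp p a := by ring
    exact (he ▸ h).hasDerivWithinAt
  have hGb : ∀ s ∈ uIcc (0:ℝ) u, ‖Jpp p (a + s) - Jpp p a‖ ≤ K := by
    intro s hs
    obtain ⟨h1, h2, -⟩ := hmem s hs
    rw [Real.norm_eq_abs]
    refine (jpp_diff hp1 hp2 hβ1 hβ2 ha h2).trans ?_
    rw [hK]
    refine mul_le_mul_of_nonneg_left (mul_le_mul_of_nonneg_left ?_
      (Real.rpow_nonneg (abs_nonneg a) _)) hCJ0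
    exact Real.rpow_le_rpow (abs_nonneg s) h1 hβ1.le
  have hG : ∀ s ∈ uIcc (0:ℝ) u, |Jq p (a + s) - Jq p a - Jpp p a * s| ≤ K * |u| := by
    intro s hs
    have := Convex.norm_image_sub_le_of_norm_hasDerivWithin_le hGd hGb
      (convex_uIcc _ _) (left_mem_uIcc) hs
    simp only [add_zero, sub_self, mul_zero, sub_zero, Real.norm_eq_abs] at this
    refine this.trans ?_
    exact mul_le_mul_of_nonneg_left ((hmem s hs).1) hK0
  -- second order: F
  have hFd : ∀ s ∈ uIcc (0:ℝ) u, HasDerivWithinAt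
      (fun s => Jp p (a + s) - Jp p a - Jq p a * s - Jpp p a * s ^ 2 / 2)
      (Jq p (a + s) - Jq p a - Jpp p a * s) (uIcc (0:ℝ) u) s := by
    intro s hs
    obtain ⟨-, -, hne⟩ := hmem s hs
    have hline : HasDerivAt (fun s : ℝ => a + s) 1 s := by
      simpa using (hasDerivAt_id s).const_add a
    have h := ((((hasDerivAt_Jp p hne).comp s hline).sub_const (Jp p a)).sub
      ((hasDerivAt_id s).const_mul (Jq p a))).sub
      (((hasDerivAt_pow 2 s).const_mul (Jpp p a)).div_const 2)
    have he : Jq p (a + s) * 1 - Jq p a * 1 - Jpp p a * (↑2 * s ^ (2 - 1)) / 2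
        = Jq p (a + s) - Jq p a - Jpp p a * s := by push_cast; ring
    exact (he ▸ h).hasDerivWithinAt
  have hFb : ∀ s ∈ uIcc (0:ℝ) u,
      ‖Jq p (a + s) - Jq p a - Jpp p a * s‖ ≤ K * |u| := by
    intro s hs; rw [Real.norm_eq_abs]; exact hG s hs
  have hfin := Convex.norm_image_sub_le_of_norm_hasDerivWithin_le hFd hFb
    (convex_uIcc _ _) (left_mem_uIcc) (right_mem_uIcc)
  simp only [add_zero, sub_self, mul_zero, zero_pow, zero_div, sub_zero,
    Real.norm_eq_abs, ne_eq, OfNat.ofNat_ne_zero, not_false_eq_true] at hfin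
  refine hfin.trans ?_
  rw [mul_assoc, abs_mul_abs_self, ← sq]

lemma jp_key {p β : ℝ} (hp1 : 2 < p) (hp2 : p < 3) (hβ1 : 0 < β) (hβ2 : β ≤ 1)
    {a u v : ℝ} (ha : a ≠ 0) (hu : |u| ≤ |a| / 2) (hv : |v| ≤ |a| / 2) :
    |Jp p (a + u) - Jp p (a - v) - Jq p a * (u + v) - Jpp p a * (u ^ 2 - v ^ 2) / 2|
      ≤ (p - 1) * (p - 2) * 2 ^ (4 - p) *
        (|a| ^ (p - 3 - β) * (|u| ^ β * u ^ 2 + |v| ^ β * v ^ 2)) := by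
  have h1 := jp_taylor2 hp1 hp2 hβ1 hβ2 ha hu
  have hv' : |(-v)| ≤ |a| / 2 := by rwa [abs_neg]
  have h2 := jp_taylor2 hp1 hp2 hβ1 hβ2 ha hv'
  rw [abs_neg, neg_sq] at h2
  have key : Jp p (a + u) - Jp p (a - v) - Jq p a * (u + v) - Jpp p a * (u ^ 2 - v ^ 2) / 2
      = (Jp p (a + u) - Jp p a - Jq p a * u - Jpp p a * u ^ 2 / 2)
        - (Jp p (a + -v) - Jp p a - Jq p a * (-v) - Jpp p a * v ^ 2 / 2) := by
    rw [show a + -v = a - v by ring]; ring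
  rw [key]
  calc |_ - _| ≤ _ := abs_sub _ _
    _ ≤ (p - 1) * (p - 2) * 2 ^ (4 - p) * (|a| ^ (p - 3 - β) * |u| ^ β) * u ^ 2
        + (p - 1) * (p - 2) * 2 ^ (4 - p) * (|a| ^ (p - 3 - β) * |v| ^ β) * v ^ 2 :=
      add_le_add h1 h2
    _ = (p - 1) * (p - 2) * 2 ^ (4 - p) *
        (|a| ^ (p - 3 - β) * (|u| ^ β * u ^ 2 + |v| ^ β * v ^ 2)) := by ring

/-! ### Taylor bounds -/



lemma mvt01 {f g : ℝ → ℝ} {K : ℝ} (hf : ∀ θ ∈ Icc (0:ℝ) 1, HasDerivAt f (g θ) θ)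
    (hf0 : f 0 = 0) (hg : ∀ θ ∈ Icc (0:ℝ) 1, |g θ| ≤ K) :
    ∀ θ ∈ Icc (0:ℝ) 1, |f θ| ≤ K := by
  intro θ hθ
  have hK : 0 ≤ K := le_trans (abs_nonneg _) (hg 0 ⟨le_refl 0, zero_le_one⟩)
  have h := Convex.norm_image_sub_le_of_norm_hasDerivWithin_le
    (fun z hz => (hf z hz).hasDerivWithinAt)
    (fun z hz => by simpa [Real.norm_eq_abs] using hg z hz) (convex_Icc 0 1)
    (left_mem_Icc.2 zero_le_one) hθ
  rw [hf0, sub_zero, sub_zero, Real.norm_eq_abs, Real.norm_eq_abs] at h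
  calc |f θ| ≤ K * |θ| := h
    _ ≤ K * 1 := mul_le_mul_of_nonneg_left (abs_le.2 ⟨by linarith [hθ.1], hθ.2⟩) hK
    _ = K := mul_one K

lemma taylor_bounds {d : ℕ} {φ : Euc d → ℝ} {x : Euc d} {R M' : ℝ}
    (hsm : ContDiffOn ℝ 4 φ (ball x R))
    (hbd : ∀ k : ℕ, k ≤ 4 → ∀ z ∈ ball x R, ‖iteratedFDerivWithin ℝ k φ (ball x R) z‖ ≤ M')
    {y : Euc d} (hy : ‖y‖ < R) :
    |φ (x + y) - φ x - innP (gradient φ x) y| ≤ M' * ‖y‖ ^ 2 ∧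
    |φ (x - y) - φ x + innP (gradient φ x) y| ≤ M' * ‖y‖ ^ 2 ∧
    |φ (x + y) - φ (x - y) - 2 * innP (gradient φ x) y| ≤ 2 * M' * ‖y‖ ^ 3 ∧
    |φ (x + y) + φ (x - y) - 2 * φ x - D2 φ x y y| ≤ 2 * M' * ‖y‖ ^ 4 ∧
    |innP (gradient φ x) y| ≤ M' * ‖y‖ ∧
    |D2 φ x y y| ≤ M' * ‖y‖ ^ 2 := by
  have hso : IsOpen (ball x R) := isOpen_ball
  have hsU : UniqueDiffOn ℝ (ball x R) := hso.uniqueDiffOn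
  have hR0 : 0 < R := lt_of_le_of_lt (norm_nonneg y) hy
  have hxs : x ∈ ball x R := mem_ball_self hR0
  have hmem : ∀ θ : ℝ, |θ| ≤ 1 → x + θ • y ∈ ball x R := by
    intro θ hθ
    rw [mem_ball, dist_eq_norm, add_sub_cancel_left, norm_smul, Real.norm_eq_abs]
    calc |θ| * ‖y‖ ≤ 1 * ‖y‖ := mul_le_mul_of_nonneg_right hθ (norm_nonneg y)
      _ = ‖y‖ := one_mul _
      _ < R := hy
  have hmem' : ∀ θ : ℝ, |θ| ≤ 1 → x - θ • y ∈ ball x R := by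
    intro θ hθ
    have := hmem (-θ) (by rwa [abs_neg])
    rwa [neg_smul, ← sub_eq_add_neg] at this
  set ψ : ℕ → ℝ → ℝ :=
    fun k θ => iteratedFDerivWithin ℝ k φ (ball x R) (x + θ • y) (fun _ => y) with hψ
  set χ : ℕ → ℝ → ℝ :=
    fun k θ => iteratedFDerivWithin ℝ k φ (ball x R) (x - θ • y) (fun _ => y) with hχ
  have hdiff : ∀ (k : ℕ), k < 4 → ∀ z ∈ ball x R,
      HasFDerivAt (iteratedFDerivWithin ℝ k φ (ball x R))
        (fderivWithin ℝ (iteratedFDerivWithin ℝ k φ (ball x R)) (ball x R) z) z := by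
    intro k hk z hz
    have h1 : DifferentiableWithinAt ℝ (iteratedFDerivWithin ℝ k φ (ball x R)) (ball x R) z :=
      hsm.differentiableOn_iteratedFDerivWithin (by exact_mod_cast hk) hsU z hz
    have h2 := (h1.differentiableAt (hso.mem_nhds hz)).hasFDerivAt
    rwa [← fderivWithin_of_isOpen hso hz] at h2
  have hsucc : ∀ (k : ℕ) (z : Euc d), z ∈ ball x R → ∀ w : Euc d,
      (fderivWithin ℝ (iteratedFDerivWithin ℝ k φ (ball x R)) (ball x R) z w) (fun _ => y)
        = iteratedFDerivWithin ℝ (k+1) φ (ball x R) z (Fin.cons w (fun _ => y)) := by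
    intro k z hz w
    rw [iteratedFDerivWithin_succ_apply_left, Fin.cons_zero, Fin.tail_cons]
  have hconsy : ∀ k : ℕ, (Fin.cons y (fun _ => y) : Fin (k+1) → Euc d) = fun _ => y := by
    intro k
    funext i
    refine Fin.cases ?_ ?_ i <;> simp
  have hψd : ∀ (k : ℕ), k < 4 → ∀ θ : ℝ, |θ| ≤ 1 → HasDerivAt (ψ k) (ψ (k+1) θ) θ := by
    intro k hk θ hθ
    have hz := hmem θ hθ
    have hline : HasDerivAt (fun θ : ℝ => x + θ • y) y θ := by
      simpa using ((hasDerivAt_id θ).smul_const y).const_add x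
    have h1 := (hdiff k hk _ hz).comp_hasDerivAt θ hline
    have h2 := (ContinuousMultilinearMap.apply ℝ (fun _ : Fin k => Euc d) ℝ
      (fun _ => y)).hasFDerivAt.comp_hasDerivAt θ h1
    have he : (ContinuousMultilinearMap.apply ℝ (fun _ : Fin k => Euc d) ℝ (fun _ => y))
        ((fderivWithin ℝ (iteratedFDerivWithin ℝ k φ (ball x R)) (ball x R) (x + θ • y)) y)
        = ψ (k+1) θ := by
      show (fderivWithin ℝ (iteratedFDerivWithin ℝ k φ (ball x R)) (ball x R) (x + θ • y) y)
        (fun _ => y) = _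
      rw [hsucc k _ hz y, hconsy k]
    rw [← he]
    exact h2
  have hχd : ∀ (k : ℕ), k < 4 → ∀ θ : ℝ, |θ| ≤ 1 → HasDerivAt (χ k) (-χ (k+1) θ) θ := by
    intro k hk θ hθ
    have hz := hmem' θ hθ
    have hline : HasDerivAt (fun θ : ℝ => x - θ • y) (-y) θ := by
      simpa using ((hasDerivAt_id θ).smul_const y).const_sub x
    have h1 := (hdiff k hk _ hz).comp_hasDerivAt θ hline
    have h2 := (ContinuousMultilinearMap.apply ℝ (fun _ : Fin k => Euc d) ℝ
      (fun _ => y)).hasFDerivAt.comp_hasDerivAt θ h1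
    have he : (ContinuousMultilinearMap.apply ℝ (fun _ : Fin k => Euc d) ℝ (fun _ => y))
        ((fderivWithin ℝ (iteratedFDerivWithin ℝ k φ (ball x R)) (ball x R) (x - θ • y)) (-y))
        = -χ (k+1) θ := by
      show (fderivWithin ℝ (iteratedFDerivWithin ℝ k φ (ball x R)) (ball x R) (x - θ • y) (-y))
        (fun _ => y) = _
      rw [map_neg, ContinuousMultilinearMap.neg_apply, hsucc k _ hz y, hconsy k]
    rw [← he]
    exact h2
  have hψb : ∀ (k : ℕ), k ≤ 4 → ∀ θ : ℝ, |θ| ≤ 1 → |ψ k θ| ≤ M' * ‖y‖ ^ k := by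
    intro k hk θ hθ
    have hz := hmem θ hθ
    have h1 := (iteratedFDerivWithin ℝ k φ (ball x R) (x + θ • y)).le_opNorm (fun _ => y)
    rw [show (∏ i : Fin k, ‖(fun _ : Fin k => y) i‖) = ‖y‖ ^ k by
      simp [Finset.prod_const, Finset.card_univ]] at h1
    calc |ψ k θ| ≤ ‖iteratedFDerivWithin ℝ k φ (ball x R) (x + θ • y)‖ * ‖y‖ ^ k := h1
      _ ≤ M' * ‖y‖ ^ k :=
        mul_le_mul_of_nonneg_right (hbd k hk _ hz) (pow_nonneg (norm_nonneg y) k)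
  have hχb : ∀ (k : ℕ), k ≤ 4 → ∀ θ : ℝ, |θ| ≤ 1 → |χ k θ| ≤ M' * ‖y‖ ^ k := by
    intro k hk θ hθ
    have hz := hmem' θ hθ
    have h1 := (iteratedFDerivWithin ℝ k φ (ball x R) (x - θ • y)).le_opNorm (fun _ => y)
    rw [show (∏ i : Fin k, ‖(fun _ : Fin k => y) i‖) = ‖y‖ ^ k by
      simp [Finset.prod_const, Finset.card_univ]] at h1
    calc |χ k θ| ≤ ‖iteratedFDerivWithin ℝ k φ (ball x R) (x - θ • y)‖ * ‖y‖ ^ k := h1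
      _ ≤ M' * ‖y‖ ^ k :=
        mul_le_mul_of_nonneg_right (hbd k hk _ hz) (pow_nonneg (norm_nonneg y) k)
  have hM0 : 0 ≤ M' := by
    have := le_trans (abs_nonneg _) (hψb 0 (by norm_num) 0 (by norm_num))
    simpa using this
  have h0eq : ∀ k, χ k 0 = ψ k 0 := by intro k; simp [hψ, hχ]
  have ha_eq : innP (gradient φ x) y = ψ 1 0 := by
    have h1 : innP (gradient φ x) y = fderiv ℝ φ x y := by
      show (inner ℝ (gradient φ x) y : ℝ) = fderiv ℝ φ x y
      rw [show gradient φ x = (InnerProductSpace.toDual ℝ (Euc d)).symm (fderiv ℝ φ x) from rfl]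
      exact InnerProductSpace.toDual_symm_apply
    rw [h1]
    have h2 : ψ 1 0 = iteratedFDerivWithin ℝ 1 φ (ball x R) x (fun _ => y) := by
      simp [hψ]
    rw [h2, iteratedFDerivWithin_one_apply (hsU x hxs), fderivWithin_of_isOpen hso hxs]
  have hq_eq : D2 φ x y y = ψ 2 0 := by
    have h1 := iteratedFDerivWithin_of_isOpen (𝕜 := ℝ) (f := φ) 2 hso hxs
    have h2 : (![y, y] : Fin 2 → Euc d) = fun _ => y := by
      funext i; fin_cases i <;> rfl
    show iteratedFDeriv ℝ 2 φ x ![y, y] = _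
    rw [h2, ← h1]
    simp [hψ]
  have hIcc1 : ∀ θ ∈ Icc (0:ℝ) 1, |θ| ≤ 1 :=
    fun θ hθ => abs_le.2 ⟨by linarith [hθ.1], hθ.2⟩
  have h1mem : (1:ℝ) ∈ Icc (0:ℝ) 1 := ⟨zero_le_one, le_refl 1⟩
  -- (F1) |φ(x+y) - φ x - a| ≤ M' t²
  have hP2 := mvt01 (f := fun θ => ψ 1 θ - ψ 1 0) (g := fun θ => ψ 2 θ)
    (fun θ hθ => (hψd 1 (by norm_num) θ (hIcc1 θ hθ)).sub_const (ψ 1 0))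
    (by simp) (fun θ hθ => hψb 2 (by norm_num) θ (hIcc1 θ hθ))
  have hP1 := mvt01 (f := fun θ => ψ 0 θ - φ x - θ * ψ 1 0) (g := fun θ => ψ 1 θ - ψ 1 0)
    (fun θ hθ => by
      have h := ((hψd 0 (by norm_num) θ (hIcc1 θ hθ)).sub_const (φ x)).sub
        ((hasDerivAt_id θ).mul_const (ψ 1 0))
      have he : ψ 1 θ - 1 * ψ 1 0 = ψ 1 θ - ψ 1 0 := by ring
      rwa [he] at h)
    (by simp [hψ]) hP2
  have hF1 : |φ (x + y) - φ x - innP (gradient φ x) y| ≤ M' * ‖y‖ ^ 2 := by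
    have := hP1 1 h1mem
    simpa [hψ, one_smul, ha_eq] using this
  -- (F1') |φ(x-y) - φ x + a| ≤ M' t²
  have hQ2 := mvt01 (f := fun θ => -χ 1 θ + ψ 1 0) (g := fun θ => χ 2 θ)
    (fun θ hθ => by
      have h := ((hχd 1 (by norm_num) θ (hIcc1 θ hθ)).neg).add_const (ψ 1 0)
      have he : -(-χ 2 θ) = χ 2 θ := by ring
      rwa [he] at h)
    (by simp [h0eq]) (fun θ hθ => hχb 2 (by norm_num) θ (hIcc1 θ hθ))
  have hQ1 := mvt01 (f := fun θ => χ 0 θ - φ x + θ * ψ 1 0) (g := fun θ => -χ 1 θ + ψ 1 0)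
    (fun θ hθ => by
      have h := ((hχd 0 (by norm_num) θ (hIcc1 θ hθ)).sub_const (φ x)).add
        ((hasDerivAt_id θ).mul_const (ψ 1 0))
      have he : -χ 1 θ + 1 * ψ 1 0 = -χ 1 θ + ψ 1 0 := by ring
      rwa [he] at h)
    (by simp [hψ, hχ]) hQ2
  have hF1' : |φ (x - y) - φ x + innP (gradient φ x) y| ≤ M' * ‖y‖ ^ 2 := by
    have := hQ1 1 h1mem
    simpa [hχ, one_smul, ha_eq] using this
  -- (F2) |φ(x+y) - φ(x-y) - 2a| ≤ 2M' t³
  have hH3 := mvt01 (f := fun θ => ψ 2 θ - χ 2 θ) (g := fun θ => ψ 3 θ + χ 3 θ)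
    (fun θ hθ => by
      have h := (hψd 2 (by norm_num) θ (hIcc1 θ hθ)).sub (hχd 2 (by norm_num) θ (hIcc1 θ hθ))
      have he : ψ 3 θ - -χ 3 θ = ψ 3 θ + χ 3 θ := by ring
      rwa [he] at h)
    (by simp [h0eq])
    (fun θ hθ => by
      have := abs_add_le (ψ 3 θ) (χ 3 θ)
      have h1 := hψb 3 (by norm_num) θ (hIcc1 θ hθ)
      have h2 := hχb 3 (by norm_num) θ (hIcc1 θ hθ)
      calc |ψ 3 θ + χ 3 θ| ≤ |ψ 3 θ| + |χ 3 θ| := abs_add_le _ _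
        _ ≤ 2 * M' * ‖y‖ ^ 3 := by linarith)
  have hH2 := mvt01 (f := fun θ => ψ 1 θ + χ 1 θ - 2 * ψ 1 0) (g := fun θ => ψ 2 θ - χ 2 θ)
    (fun θ hθ => by
      have h := ((hψd 1 (by norm_num) θ (hIcc1 θ hθ)).add
        (hχd 1 (by norm_num) θ (hIcc1 θ hθ))).sub_const (2 * ψ 1 0)
      have he : ψ 2 θ + -χ 2 θ = ψ 2 θ - χ 2 θ := by ring
      rwa [he] at h)
    (by simp [h0eq]; ring) hH3
  have hH1 := mvt01 (f := fun θ => ψ 0 θ - χ 0 θ - 2 * ψ 1 0 * θ)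
    (g := fun θ => ψ 1 θ + χ 1 θ - 2 * ψ 1 0)
    (fun θ hθ => by
      have h := ((hψd 0 (by norm_num) θ (hIcc1 θ hθ)).sub
        (hχd 0 (by norm_num) θ (hIcc1 θ hθ))).sub
        ((hasDerivAt_id θ).const_mul (2 * ψ 1 0))
      have he : ψ 1 θ - -χ 1 θ - 2 * ψ 1 0 * 1 = ψ 1 θ + χ 1 θ - 2 * ψ 1 0 := by ring
      rwa [he] at h)
    (by simp [hψ, hχ]; try ring) hH2
  have hF2 : |φ (x + y) - φ (x - y) - 2 * innP (gradient φ x) y| ≤ 2 * M' * ‖y‖ ^ 3 := by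
    have := hH1 1 h1mem
    simp only [hψ, hχ, one_smul] at this
    rw [ha_eq]
    have he : φ (x + y) - φ (x - y) - 2 * ψ 1 0 = φ (x + y) - φ (x - y) - 2 * ψ 1 0 * 1 := by
      ring
    rw [he]
    simpa [hψ, hχ] using this
  -- (F3) |φ(x+y) + φ(x-y) - 2 φ x - q| ≤ 2 M' t⁴
  have hG4 := mvt01 (f := fun θ => ψ 3 θ - χ 3 θ) (g := fun θ => ψ 4 θ + χ 4 θ)
    (fun θ hθ => by
      have h := (hψd 3 (by norm_num) θ (hIcc1 θ hθ)).sub (hχd 3 (by norm_num) θ (hIcc1 θ hθ))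
      have he : ψ 4 θ - -χ 4 θ = ψ 4 θ + χ 4 θ := by ring
      rwa [he] at h)
    (by simp [h0eq])
    (fun θ hθ => by
      have h1 := hψb 4 (by norm_num) θ (hIcc1 θ hθ)
      have h2 := hχb 4 (by norm_num) θ (hIcc1 θ hθ)
      calc |ψ 4 θ + χ 4 θ| ≤ |ψ 4 θ| + |χ 4 θ| := abs_add_le _ _
        _ ≤ 2 * M' * ‖y‖ ^ 4 := by linarith)
  have hG3 := mvt01 (f := fun θ => ψ 2 θ + χ 2 θ - 2 * ψ 2 0) (g := fun θ => ψ 3 θ - χ 3 θ)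
    (fun θ hθ => by
      have h := ((hψd 2 (by norm_num) θ (hIcc1 θ hθ)).add
        (hχd 2 (by norm_num) θ (hIcc1 θ hθ))).sub_const (2 * ψ 2 0)
      have he : ψ 3 θ + -χ 3 θ = ψ 3 θ - χ 3 θ := by ring
      rwa [he] at h)
    (by simp [h0eq]; ring) hG4
  have hG2 := mvt01 (f := fun θ => ψ 1 θ - χ 1 θ - 2 * ψ 2 0 * θ)
    (g := fun θ => ψ 2 θ + χ 2 θ - 2 * ψ 2 0)
    (fun θ hθ => by
      have h := ((hψd 1 (by norm_num) θ (hIcc1 θ hθ)).sub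
        (hχd 1 (by norm_num) θ (hIcc1 θ hθ))).sub
        ((hasDerivAt_id θ).const_mul (2 * ψ 2 0))
      have he : ψ 2 θ - -χ 2 θ - 2 * ψ 2 0 * 1 = ψ 2 θ + χ 2 θ - 2 * ψ 2 0 := by ring
      rwa [he] at h)
    (by simp [hψ, hχ]; try ring) hG3
  have hG1 := mvt01 (f := fun θ => ψ 0 θ + χ 0 θ - 2 * φ x - ψ 2 0 * θ ^ 2)
    (g := fun θ => ψ 1 θ - χ 1 θ - 2 * ψ 2 0 * θ)
    (fun θ hθ => by
      have h := (((hψd 0 (by norm_num) θ (hIcc1 θ hθ)).add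
        (hχd 0 (by norm_num) θ (hIcc1 θ hθ))).sub_const (2 * φ x)).sub
        ((hasDerivAt_pow 2 θ).const_mul (ψ 2 0))
      refine h.congr_deriv ?_
      push_cast
      ring)
    (by simp [hψ, hχ]; try ring) hG2
  have hF3 : |φ (x + y) + φ (x - y) - 2 * φ x - D2 φ x y y| ≤ 2 * M' * ‖y‖ ^ 4 := by
    have := hG1 1 h1mem
    rw [hq_eq]
    have he : φ (x + y) + φ (x - y) - 2 * φ x - ψ 2 0
        = φ (x + y) + φ (x - y) - 2 * φ x - ψ 2 0 * 1 ^ 2 := by ring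
    rw [he]
    simpa [hψ, hχ, one_smul] using this
  -- (F5), (F6)
  have hF5 : |innP (gradient φ x) y| ≤ M' * ‖y‖ := by
    rw [ha_eq]
    simpa using hψb 1 (by norm_num) 0 (by norm_num)
  have hF6 : |D2 φ x y y| ≤ M' * ‖y‖ ^ 2 := by
    rw [hq_eq]
    exact hψb 2 (by norm_num) 0 (by norm_num)
  exact ⟨hF1, hF1', hF2, hF3, hF5, hF6⟩

/-! ### Main theorem -/

set_option maxHeartbeats 2000000 in
/-- Expansion of `D_y[φ](x)` for `2 < p < 3`, `β ∈ (0,p−2)`, in the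
region `|∇φ(x)·y| > K₀|y|²`, with `Φ(η) = 1 + |η|^{p−3} + |η|^{p−3−β}`. -/
theorem statement14 {d : ℕ} (p β : ℝ) (hp1 : 2 < p) (hp2 : p < 3)
    (hβ : β ∈ Set.Ioo 0 (p - 2)) (x : Euc d) (R : ℝ)
    (hR0 : 0 < R) (hR1 : R < 1) (φ : Euc d → ℝ) (M : ℝ) (hφ : C4bOn φ (ball x R) M) :
    ∃ C > 0, ∀ y : Euc d, y ∈ ball (0 : Euc d) (R / 2) → y ≠ 0 →
      d2SupOn φ (ball x R) * ‖y‖ ^ 2 < |innP (gradient φ x) y| →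
      |DyOp p φ x y -
          (p - 1) / ‖y‖ ^ p * |innP (gradient φ x) y| ^ (p - 2) * D2 φ x y y| ≤
        C * (1 + |innP (gradient φ x) (‖y‖⁻¹ • y)| ^ (p - 3) +
            |innP (gradient φ x) (‖y‖⁻¹ • y)| ^ (p - 3 - β)) * ‖y‖ ^ (1 + β) := by
  obtain ⟨hβ1, hβ2⟩ := hβ
  have hβle1 : β ≤ 1 := by linarith only [hβ2, hp2]
  obtain ⟨hsm, hbd⟩ := hφ
  set M' := max M 1 with hM'def
  have hM'1 : (1:ℝ) ≤ M' := le_max_right _ _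
  have hM'0 : (0:ℝ) < M' := lt_of_lt_of_le one_pos hM'1
  have hbd' : ∀ k : ℕ, k ≤ 4 → ∀ z ∈ ball x R,
      ‖iteratedFDerivWithin ℝ k φ (ball x R) z‖ ≤ M' :=
    fun k hk z hz => (hbd k hk z hz).trans (le_max_left _ _)
  -- constants
  set CJ := (p - 1) * (p - 2) * (2:ℝ) ^ ((4:ℝ) - p) with hCJdef
  have hCJ0 : 0 < CJ := by
    rw [hCJdef]
    exact mul_pos (mul_pos (by linarith only [hp1]) (by linarith only [hp1]))
      (Real.rpow_pos_of_pos two_pos _)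
  set C1 := 2 * CJ * M' ^ ((2:ℝ) + β) with hC1def
  have hC10 : 0 < C1 := by
    rw [hC1def]; exact mul_pos (mul_pos two_pos hCJ0) (Real.rpow_pos_of_pos hM'0 _)
  set C2 := 3 * (p - 1) * (p - 2) * (M' * M') with hC2def
  have hC20 : 0 < C2 := by
    rw [hC2def]
    exact mul_pos (mul_pos (mul_pos (by norm_num) (by linarith only [hp1]))
      (by linarith only [hp1])) (mul_pos hM'0 hM'0)
  set C3 := 2 * (p - 1) * M' ^ (p - 1) with hC3def
  have hC30 : 0 < C3 := by
    rw [hC3def]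
    exact mul_pos (mul_pos two_pos (by linarith only [hp1])) (Real.rpow_pos_of_pos hM'0 _)
  set CB := (2 * (3 * M') ^ (p - 1) + (p - 1) * (2 * M') ^ (p - 2) * M') *
    (2 * M') ^ (3 + β - p) with hCBdef
  have hCB0 : 0 < CB := by
    rw [hCBdef]
    have h1 : (0:ℝ) < (3 * M') ^ (p - 1) := Real.rpow_pos_of_pos (by linarith only [hM'0]) _
    have h2 : (0:ℝ) < (2 * M') ^ (p - 2) := Real.rpow_pos_of_pos (by linarith only [hM'0]) _
    have h3 : (0:ℝ) < (2 * M') ^ (3 + β - p) := Real.rpow_pos_of_pos (by linarith only [hM'0]) _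
    have h4 : (0:ℝ) < p - 1 := by linarith only [hp1]
    have h5 := mul_pos (mul_pos h4 h2) hM'0
    exact mul_pos (by linarith only [h1, h5]) h3
  set C := C1 + C2 + C3 + CB + 1 with hCdef
  have hC0 : 0 < C := by rw [hCdef]; linarith only [hC10, hC20, hC30, hCB0]
  refine ⟨C, hC0, ?_⟩
  intro y hy hy0 hcond
  have ht0 : 0 < ‖y‖ := norm_pos_iff.2 hy0
  have htR : ‖y‖ < R / 2 := by rwa [mem_ball, dist_zero_right] at hy
  have ht1 : ‖y‖ < 1 := by linarith only [htR, hR1]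
  have htR' : ‖y‖ < R := by linarith only [htR, hR0]
  obtain ⟨T1, T1', T2, T3, T5, T6⟩ := taylor_bounds hsm hbd' htR'
  set a := innP (gradient φ x) y with hadef
  have hK0 : (0:ℝ) ≤ d2SupOn φ (ball x R) * ‖y‖ ^ 2 := by
    have h1 : (0:ℝ) ≤ d2SupOn φ (ball x R) :=
      Real.sSup_nonneg (by rintro _ ⟨z, -, rfl⟩; exact norm_nonneg _)
    positivity
  have ha0 : a ≠ 0 := by
    intro h
    rw [h, abs_zero] at hcond
    linarith only [hcond, hK0]
  have haA : 0 < |a| := abs_pos.2 ha0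
  set u := φ (x + y) - φ x - a with hudef
  set v := φ (x - y) - φ x + a with hvdef
  set q := D2 φ x y y with hqdef
  have hu : |u| ≤ M' * ‖y‖ ^ 2 := T1
  have hv : |v| ≤ M' * ‖y‖ ^ 2 := T1'
  have huvq : |u + v - q| ≤ 2 * M' * ‖y‖ ^ 4 := by
    have he : u + v - q = φ (x + y) + φ (x - y) - 2 * φ x - q := by
      rw [hudef, hvdef]; ring
    rw [he]
    exact T3
  have huv2 : |u - v| ≤ 2 * M' * ‖y‖ ^ 3 := by
    have he : u - v = φ (x + y) - φ (x - y) - 2 * a := by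
      rw [hudef, hvdef]; ring
    rw [he]
    exact T2
  have ha5 : |a| ≤ M' * ‖y‖ := T5
  have hq6 : |q| ≤ M' * ‖y‖ ^ 2 := T6
  set η := |a| / ‖y‖ with hηdef
  have hη0 : 0 < η := div_pos haA ht0
  have hηM : η ≤ M' := by
    rw [hηdef, div_le_iff₀ ht0]
    linarith only [ha5]
  have haeq : |a| = η * ‖y‖ := by rw [hηdef]; field_simp
  have hinn : |innP (gradient φ x) (‖y‖⁻¹ • y)| = η := by
    have h1 : innP (gradient φ x) (‖y‖⁻¹ • y) = ‖y‖⁻¹ * a := by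
      rw [hadef]
      exact real_inner_smul_right _ _ _
    rw [h1, abs_mul, abs_inv, abs_norm, hηdef]
    rw [inv_mul_eq_div]
  -- helper facts about rpow of ‖y‖
  have hmul : ∀ c e : ℝ, ‖y‖ ^ c * ‖y‖ ^ e = ‖y‖ ^ (c + e) :=
    fun c e => (Real.rpow_add ht0 c e).symm
  have hmono : ∀ c e : ℝ, c ≤ e → ‖y‖ ^ e ≤ ‖y‖ ^ c :=
    fun c e h => Real.rpow_le_rpow_of_exponent_ge ht0 ht1.le h
  have hsq : ∀ c : ℝ, ((‖y‖ ^ 2 : ℝ)) ^ c = ‖y‖ ^ (2 * c) := by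
    intro c
    rw [← Real.rpow_natCast ‖y‖ 2, ← Real.rpow_mul (norm_nonneg y)]
    norm_num
  have hY0 : (0:ℝ) ≤ ‖y‖ ^ (p + 1 + β) := Real.rpow_nonneg (norm_nonneg y) _
  have hX10 : (0:ℝ) ≤ η ^ (p - 3 - β) := Real.rpow_nonneg hη0.le _
  have hX20 : (0:ℝ) ≤ η ^ (p - 3) := Real.rpow_nonneg hη0.le _
  have haη : ∀ c : ℝ, |a| ^ c = η ^ c * ‖y‖ ^ c := by
    intro c
    rw [haeq, Real.mul_rpow hη0.le (norm_nonneg y)]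
  -- main estimate
  have hmain : |Jp p (a + u) - Jp p (a - v) - (p - 1) * |a| ^ (p - 2) * q|
      ≤ C * (1 + η ^ (p - 3) + η ^ (p - 3 - β)) * ‖y‖ ^ (p + 1 + β) := by
    by_cases hcase : |u| ≤ |a| / 2 ∧ |v| ≤ |a| / 2
    · -- Case A
      have h1 := jp_key hp1 hp2 hβ1 hβle1 ha0 hcase.1 hcase.2
      have hid : Jp p (a + u) - Jp p (a - v) - (p - 1) * |a| ^ (p - 2) * q
          = (Jp p (a + u) - Jp p (a - v) - Jq p a * (u + v)
              - Jpp p a * (u ^ 2 - v ^ 2) / 2)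
            + Jpp p a * (u ^ 2 - v ^ 2) / 2 + Jq p a * (u + v - q) := by
        simp only [Jq]; ring
      -- term 1
      have hW : ∀ w : ℝ, |w| ≤ M' * ‖y‖ ^ 2 →
          |w| ^ β * w ^ 2 ≤ M' ^ ((2:ℝ) + β) * ‖y‖ ^ ((4:ℝ) + 2 * β) := by
        intro w hw
        have hb : (0:ℝ) < M' * ‖y‖ ^ 2 := by positivity
        have e1 : |w| ^ β ≤ (M' * ‖y‖ ^ 2) ^ β :=
          Real.rpow_le_rpow (abs_nonneg w) hw hβ1.le
        have e2 : w ^ 2 ≤ (M' * ‖y‖ ^ 2) ^ 2 := by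
          have h := pow_le_pow_left₀ (abs_nonneg w) hw 2
          rwa [sq_abs] at h
        have e3 : (M' * ‖y‖ ^ 2) ^ β * (M' * ‖y‖ ^ 2) ^ (2:ℕ)
            = M' ^ ((2:ℝ) + β) * ‖y‖ ^ ((4:ℝ) + 2 * β) := by
          rw [← Real.rpow_natCast (M' * ‖y‖ ^ 2) 2, ← Real.rpow_add hb,
            Real.mul_rpow hM'0.le (by positivity : (0:ℝ) ≤ ‖y‖ ^ 2), hsq]
          norm_num
          rw [show β + (2:ℝ) = 2 + β by ring, show (2:ℝ) * (2 + β) = 4 + 2 * β by ring]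
        calc |w| ^ β * w ^ 2 ≤ (M' * ‖y‖ ^ 2) ^ β * (M' * ‖y‖ ^ 2) ^ 2 :=
              mul_le_mul e1 e2 (sq_nonneg w) (Real.rpow_nonneg hb.le _)
          _ = M' ^ ((2:ℝ) + β) * ‖y‖ ^ ((4:ℝ) + 2 * β) := e3
      have t1 : |Jp p (a + u) - Jp p (a - v) - Jq p a * (u + v)
            - Jpp p a * (u ^ 2 - v ^ 2) / 2|
          ≤ C1 * η ^ (p - 3 - β) * ‖y‖ ^ (p + 1 + β) := by
        have hyy : ‖y‖ ^ (p - 3 - β) * ‖y‖ ^ ((4:ℝ) + 2 * β) = ‖y‖ ^ (p + 1 + β) := by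
          rw [hmul]; congr 1; ring
        calc |Jp p (a + u) - Jp p (a - v) - Jq p a * (u + v)
              - Jpp p a * (u ^ 2 - v ^ 2) / 2|
            ≤ CJ * (|a| ^ (p - 3 - β) * (|u| ^ β * u ^ 2 + |v| ^ β * v ^ 2)) := h1
          _ ≤ CJ * (|a| ^ (p - 3 - β) * (2 * (M' ^ ((2:ℝ) + β) * ‖y‖ ^ ((4:ℝ) + 2 * β)))) := by
              refine mul_le_mul_of_nonneg_left (mul_le_mul_of_nonneg_left ?_
                (Real.rpow_nonneg (abs_nonneg a) _)) hCJ0.le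
              have w1 := hW u hu
              have w2 := hW v hv
              linarith only [w1, w2]
          _ = 2 * CJ * M' ^ ((2:ℝ) + β) * η ^ (p - 3 - β)
              * (‖y‖ ^ (p - 3 - β) * ‖y‖ ^ ((4:ℝ) + 2 * β)) := by
              rw [haη]; ring
          _ = C1 * η ^ (p - 3 - β) * ‖y‖ ^ (p + 1 + β) := by rw [hyy, hC1def]
      -- term 2
      have huv3 : |u + v| ≤ 3 * M' * ‖y‖ ^ 2 := by
        have h4 : ‖y‖ ^ 4 ≤ ‖y‖ ^ 2 :=
          pow_le_pow_of_le_one (norm_nonneg y) ht1.le (by norm_num)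
        have he : u + v = (u + v - q) + q := by ring
        rw [he]
        calc |(u + v - q) + q| ≤ |u + v - q| + |q| := abs_add_le _ _
          _ ≤ 2 * M' * ‖y‖ ^ 4 + M' * ‖y‖ ^ 2 := add_le_add huvq hq6
          _ ≤ 3 * M' * ‖y‖ ^ 2 := by
              have h5 := mul_le_mul_of_nonneg_left h4 (by positivity : (0:ℝ) ≤ 2 * M')
              linarith only [h5]
      have hB1 : |u ^ 2 - v ^ 2| ≤ 6 * (M' * M') * ‖y‖ ^ 5 := by
        have he : u ^ 2 - v ^ 2 = (u + v) * (u - v) := by ring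
        rw [he, abs_mul]
        calc |u + v| * |u - v| ≤ (3 * M' * ‖y‖ ^ 2) * (2 * M' * ‖y‖ ^ 3) :=
              mul_le_mul huv3 huv2 (abs_nonneg _) (by positivity)
          _ = 6 * (M' * M') * ‖y‖ ^ 5 := by ring
      have t2 : |Jpp p a * (u ^ 2 - v ^ 2) / 2|
          ≤ C2 * η ^ (p - 3) * ‖y‖ ^ (p + 1 + β) := by
        have hJppA := abs_Jpp_le p ha0 hp1 hp2
        have hyy : ‖y‖ ^ (p - 3) * ‖y‖ ^ ((5:ℕ):ℝ) = ‖y‖ ^ (p + 2) := by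
          rw [hmul]; congr 1; push_cast; ring
        have h5 : (‖y‖:ℝ) ^ (5:ℕ) = ‖y‖ ^ ((5:ℕ):ℝ) := (Real.rpow_natCast ‖y‖ 5).symm
        have e0 : |Jpp p a * (u ^ 2 - v ^ 2) / 2| = |Jpp p a| * |u ^ 2 - v ^ 2| / 2 := by
          rw [abs_div, abs_mul]
          norm_num
        rw [e0]
        calc |Jpp p a| * |u ^ 2 - v ^ 2| / 2
            ≤ ((p - 1) * (p - 2) * |a| ^ (p - 3)) * (6 * (M' * M') * ‖y‖ ^ 5) / 2 := by
              have hnn1 : (0:ℝ) ≤ (p - 1) * (p - 2) * |a| ^ (p - 3) :=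
                mul_nonneg (mul_nonneg (by linarith only [hp1]) (by linarith only [hp1]))
                  (Real.rpow_nonneg (abs_nonneg a) _)
              have h6 := mul_le_mul hJppA hB1 (abs_nonneg _) hnn1
              linarith only [h6]
          _ = 3 * (p - 1) * (p - 2) * (M' * M') * η ^ (p - 3)
              * (‖y‖ ^ (p - 3) * ‖y‖ ^ ((5:ℕ):ℝ)) := by
              rw [haη, ← h5]; ring
          _ = C2 * η ^ (p - 3) * ‖y‖ ^ (p + 2) := by rw [hyy, hC2def]
          _ ≤ C2 * η ^ (p - 3) * ‖y‖ ^ (p + 1 + β) := by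
              refine mul_le_mul_of_nonneg_left (hmono _ _ (by linarith only [hβle1])) ?_
              exact mul_nonneg hC20.le hX20
      -- term 3
      have t3 : |Jq p a * (u + v - q)| ≤ C3 * ‖y‖ ^ (p + 1 + β) := by
        have hJq0 : (0:ℝ) ≤ Jq p a := by
          simp only [Jq]
          exact mul_nonneg (by linarith only [hp1]) (Real.rpow_nonneg (abs_nonneg a) _)
        have hJqle : Jq p a ≤ (p - 1) * M' ^ (p - 2) * ‖y‖ ^ (p - 2) := by
          simp only [Jq]
          rw [haη]
          have hle : η ^ (p - 2) ≤ M' ^ (p - 2) :=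
            Real.rpow_le_rpow hη0.le hηM (by linarith)
          have hyn : (0:ℝ) ≤ ‖y‖ ^ (p - 2) := Real.rpow_nonneg (norm_nonneg y) _
          have h7 := mul_le_mul_of_nonneg_left (mul_le_mul_of_nonneg_right hle hyn)
            (by linarith only [hp1] : (0:ℝ) ≤ p - 1)
          linarith only [h7]
        have hyy : ‖y‖ ^ (p - 2) * ‖y‖ ^ ((4:ℕ):ℝ) = ‖y‖ ^ (p + 2) := by
          rw [hmul]; congr 1; push_cast; ring
        have h4 : (‖y‖:ℝ) ^ (4:ℕ) = ‖y‖ ^ ((4:ℕ):ℝ) := (Real.rpow_natCast ‖y‖ 4).symm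
        have hMM : M' ^ (p - 2) * M' = M' ^ (p - 1) := by
          rw [show p - 1 = p - 2 + 1 by ring, Real.rpow_add_one (ne_of_gt hM'0)]
        rw [abs_mul]
        calc |Jq p a| * |u + v - q|
            ≤ ((p - 1) * M' ^ (p - 2) * ‖y‖ ^ (p - 2)) * (2 * M' * ‖y‖ ^ 4) := by
              refine mul_le_mul ?_ huvq (abs_nonneg _) ?_
              · rwa [abs_of_nonneg hJq0]
              · have hyn : (0:ℝ) ≤ ‖y‖ ^ (p - 2) := Real.rpow_nonneg (norm_nonneg y) _
                have hMn : (0:ℝ) ≤ M' ^ (p - 2) := Real.rpow_nonneg hM'0.le _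
                exact mul_nonneg (mul_nonneg (by linarith only [hp1]) hMn) hyn
          _ = 2 * (p - 1) * (M' ^ (p - 2) * M') * (‖y‖ ^ (p - 2) * ‖y‖ ^ ((4:ℕ):ℝ)) := by
              rw [← h4]; ring
          _ = C3 * ‖y‖ ^ (p + 2) := by rw [hyy, hMM, hC3def]
          _ ≤ C3 * ‖y‖ ^ (p + 1 + β) :=
              mul_le_mul_of_nonneg_left (hmono _ _ (by linarith only [hβle1])) hC30.le
      -- combine
      calc |Jp p (a + u) - Jp p (a - v) - (p - 1) * |a| ^ (p - 2) * q|
          = |(Jp p (a + u) - Jp p (a - v) - Jq p a * (u + v)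
              - Jpp p a * (u ^ 2 - v ^ 2) / 2)
            + Jpp p a * (u ^ 2 - v ^ 2) / 2 + Jq p a * (u + v - q)| := by rw [← hid]
        _ ≤ |Jp p (a + u) - Jp p (a - v) - Jq p a * (u + v)
              - Jpp p a * (u ^ 2 - v ^ 2) / 2|
            + |Jpp p a * (u ^ 2 - v ^ 2) / 2| + |Jq p a * (u + v - q)| :=
            abs_add_three _ _ _
        _ ≤ C1 * η ^ (p - 3 - β) * ‖y‖ ^ (p + 1 + β)
            + C2 * η ^ (p - 3) * ‖y‖ ^ (p + 1 + β) + C3 * ‖y‖ ^ (p + 1 + β) := by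
            linarith only [t1, t2, t3]
        _ ≤ C * (1 + η ^ (p - 3) + η ^ (p - 3 - β)) * ‖y‖ ^ (p + 1 + β) := by
            have m1 : C1 * (η ^ (p - 3 - β) * ‖y‖ ^ (p + 1 + β))
                ≤ C * (η ^ (p - 3 - β) * ‖y‖ ^ (p + 1 + β)) :=
              mul_le_mul_of_nonneg_right
                (by rw [hCdef]; linarith only [hC20, hC30, hCB0])
                (mul_nonneg hX10 hY0)
            have m2 : C2 * (η ^ (p - 3) * ‖y‖ ^ (p + 1 + β))
                ≤ C * (η ^ (p - 3) * ‖y‖ ^ (p + 1 + β)) :=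
              mul_le_mul_of_nonneg_right
                (by rw [hCdef]; linarith only [hC10, hC30, hCB0])
                (mul_nonneg hX20 hY0)
            have m3 : C3 * ‖y‖ ^ (p + 1 + β) ≤ C * ‖y‖ ^ (p + 1 + β) :=
              mul_le_mul_of_nonneg_right
                (by rw [hCdef]; linarith only [hC10, hC20, hCB0]) hY0
            linarith only [m1, m2, m3]
    · -- Case B
      have haB : |a| < 2 * (M' * ‖y‖ ^ 2) := by
        rcases not_and_or.1 hcase with h | h
        · push_neg at h; linarith only [h, hu]
        · push_neg at h; linarith only [h, hv]
      have hηB : η < 2 * M' * ‖y‖ := by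
        rw [hηdef, div_lt_iff₀ ht0]
        linarith only [haB]
      have hau : |a + u| ≤ 3 * (M' * ‖y‖ ^ 2) := by
        calc |a + u| ≤ |a| + |u| := abs_add_le _ _
          _ ≤ 3 * (M' * ‖y‖ ^ 2) := by linarith only [hu, haB]
      have hav : |a - v| ≤ 3 * (M' * ‖y‖ ^ 2) := by
        calc |a - v| ≤ |a| + |v| := abs_sub _ _
          _ ≤ 3 * (M' * ‖y‖ ^ 2) := by linarith only [hv, haB]
      have hJ1 : |Jp p (a + u)| ≤ (3 * (M' * ‖y‖ ^ 2)) ^ (p - 1) := abs_Jp_le p hp1 hau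
      have hJ2 : |Jp p (a - v)| ≤ (3 * (M' * ‖y‖ ^ 2)) ^ (p - 1) := abs_Jp_le p hp1 hav
      have hJ3 : |(p - 1) * |a| ^ (p - 2) * q|
          ≤ (p - 1) * (2 * (M' * ‖y‖ ^ 2)) ^ (p - 2) * (M' * ‖y‖ ^ 2) := by
        rw [abs_mul, abs_mul, abs_of_pos (by linarith only [hp1] : (0:ℝ) < p - 1),
          abs_of_nonneg (Real.rpow_nonneg (abs_nonneg a) _)]
        have e1 : |a| ^ (p - 2) ≤ (2 * (M' * ‖y‖ ^ 2)) ^ (p - 2) :=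
          Real.rpow_le_rpow (abs_nonneg a) haB.le (by linarith only [hp1])
        have e2 : (0:ℝ) ≤ (2 * (M' * ‖y‖ ^ 2)) ^ (p - 2) :=
          Real.rpow_nonneg (by positivity) _
        have e3 : (0:ℝ) ≤ |a| ^ (p - 2) := Real.rpow_nonneg (abs_nonneg a) _
        have e4 : |q| ≤ M' * ‖y‖ ^ 2 := hq6
        have h8 := mul_le_mul (mul_le_mul_of_nonneg_left e1
          (by linarith only [hp1] : (0:ℝ) ≤ p - 1)) e4 (abs_nonneg q)
          (mul_nonneg (by linarith only [hp1]) e2)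
        linarith only [h8]
      -- rewrite powers
      have hmm : (0:ℝ) < M' * ‖y‖ ^ 2 := by positivity
      have hsplit1 : (3 * (M' * ‖y‖ ^ 2)) ^ (p - 1)
          = (3 * M') ^ (p - 1) * ‖y‖ ^ (2 * (p - 1)) := by
        rw [show 3 * (M' * ‖y‖ ^ 2) = (3 * M') * ‖y‖ ^ 2 by ring,
          Real.mul_rpow (by linarith only [hM'0]) (by positivity), hsq]
      have hsplit2 : (2 * (M' * ‖y‖ ^ 2)) ^ (p - 2)
          = (2 * M') ^ (p - 2) * ‖y‖ ^ (2 * (p - 2)) := by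
        rw [show 2 * (M' * ‖y‖ ^ 2) = (2 * M') * ‖y‖ ^ 2 by ring,
          Real.mul_rpow (by linarith only [hM'0]) (by positivity), hsq]
      have hy2 : (‖y‖:ℝ) ^ (2:ℕ) = ‖y‖ ^ ((2:ℕ):ℝ) := (Real.rpow_natCast ‖y‖ 2).symm
      have hmerge : ‖y‖ ^ (2 * (p - 2)) * ‖y‖ ^ ((2:ℕ):ℝ) = ‖y‖ ^ (2 * (p - 1)) := by
        rw [hmul]; congr 1; push_cast; ring
      have hstep : |Jp p (a + u) - Jp p (a - v) - (p - 1) * |a| ^ (p - 2) * q|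
          ≤ (2 * (3 * M') ^ (p - 1) + (p - 1) * (2 * M') ^ (p - 2) * M')
            * ‖y‖ ^ (2 * (p - 1)) := by
        have htri : |Jp p (a + u) - Jp p (a - v) - (p - 1) * |a| ^ (p - 2) * q|
            ≤ |Jp p (a + u)| + |Jp p (a - v)| + |(p - 1) * |a| ^ (p - 2) * q| := by
          calc |Jp p (a + u) - Jp p (a - v) - (p - 1) * |a| ^ (p - 2) * q|
              ≤ |Jp p (a + u) - Jp p (a - v)| + |(p - 1) * |a| ^ (p - 2) * q| :=
                abs_sub _ _
            _ ≤ |Jp p (a + u)| + |Jp p (a - v)| + |(p - 1) * |a| ^ (p - 2) * q| := by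
                linarith only [abs_sub (Jp p (a + u)) (Jp p (a - v))]
        have hcomb : (p - 1) * (2 * (M' * ‖y‖ ^ 2)) ^ (p - 2) * (M' * ‖y‖ ^ 2)
            = (p - 1) * (2 * M') ^ (p - 2) * M' * ‖y‖ ^ (2 * (p - 1)) := by
          rw [hsplit2, hy2, show (p-1) * ((2*M') ^ (p-2) * ‖y‖ ^ (2*(p-2)))
            * (M' * ‖y‖ ^ ((2:ℕ):ℝ))
            = (p-1) * (2*M') ^ (p-2) * M' * (‖y‖ ^ (2*(p-2)) * ‖y‖ ^ ((2:ℕ):ℝ)) by ring,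
            hmerge]
        calc |Jp p (a + u) - Jp p (a - v) - (p - 1) * |a| ^ (p - 2) * q|
            ≤ |Jp p (a + u)| + |Jp p (a - v)| + |(p - 1) * |a| ^ (p - 2) * q| := htri
          _ ≤ 2 * ((3 * M') ^ (p - 1) * ‖y‖ ^ (2 * (p - 1)))
              + (p - 1) * (2 * M') ^ (p - 2) * M' * ‖y‖ ^ (2 * (p - 1)) := by
              rw [← hsplit1, ← hcomb]
              linarith only [hJ1, hJ2, hJ3]
          _ = (2 * (3 * M') ^ (p - 1) + (p - 1) * (2 * M') ^ (p - 2) * M')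
              * ‖y‖ ^ (2 * (p - 1)) := by ring
      have hexp : ‖y‖ ^ (2 * (p - 1)) = ‖y‖ ^ (p + 1 + β) * ‖y‖ ^ (p - 3 - β) := by
        rw [hmul]; congr 1; ring
      have hfrac : ‖y‖ ^ (p - 3 - β) ≤ η ^ (p - 3 - β) * (2 * M') ^ (3 + β - p) := by
        have h1 : η / (2 * M') ≤ ‖y‖ := by
          rw [div_le_iff₀ (by linarith only [hM'0] : (0:ℝ) < 2 * M')]
          linarith only [hηB]
        have h2 : (0:ℝ) < η / (2 * M') := div_pos hη0 (by linarith only [hM'0])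
        have h3 : ‖y‖ ^ (p - 3 - β) ≤ (η / (2 * M')) ^ (p - 3 - β) :=
          Real.rpow_le_rpow_of_nonpos h2 h1 (by linarith only [hβ1, hp2])
        have h4 : (η / (2 * M')) ^ (p - 3 - β)
            = η ^ (p - 3 - β) * (2 * M') ^ (3 + β - p) := by
          rw [Real.div_rpow hη0.le (by linarith only [hM'0] : (0:ℝ) ≤ 2 * M'), div_eq_mul_inv,
            ← Real.rpow_neg (by linarith only [hM'0] : (0:ℝ) ≤ 2 * M'),
            show -(p - 3 - β) = 3 + β - p by ring]
        rw [← h4]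
        exact h3
      have hCB0' : (0:ℝ) ≤ 2 * (3 * M') ^ (p - 1) + (p - 1) * (2 * M') ^ (p - 2) * M' := by
        have h1 : (0:ℝ) ≤ (3 * M') ^ (p - 1) := Real.rpow_nonneg (by linarith only [hM'0]) _
        have h2 : (0:ℝ) ≤ (2 * M') ^ (p - 2) := Real.rpow_nonneg (by linarith only [hM'0]) _
        have h9 := mul_nonneg (mul_nonneg (by linarith only [hp1] : (0:ℝ) ≤ p - 1) h2) hM'0.le
        linarith only [h1, h9]
      calc |Jp p (a + u) - Jp p (a - v) - (p - 1) * |a| ^ (p - 2) * q|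
          ≤ (2 * (3 * M') ^ (p - 1) + (p - 1) * (2 * M') ^ (p - 2) * M')
            * ‖y‖ ^ (2 * (p - 1)) := hstep
        _ = (2 * (3 * M') ^ (p - 1) + (p - 1) * (2 * M') ^ (p - 2) * M')
            * (‖y‖ ^ (p + 1 + β) * ‖y‖ ^ (p - 3 - β)) := by rw [← hexp]
        _ ≤ (2 * (3 * M') ^ (p - 1) + (p - 1) * (2 * M') ^ (p - 2) * M')
            * (‖y‖ ^ (p + 1 + β) * (η ^ (p - 3 - β) * (2 * M') ^ (3 + β - p))) := by
            refine mul_le_mul_of_nonneg_left (mul_le_mul_of_nonneg_left hfrac hY0) hCB0'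
        _ = CB * η ^ (p - 3 - β) * ‖y‖ ^ (p + 1 + β) := by rw [hCBdef]; ring
        _ ≤ C * (1 + η ^ (p - 3) + η ^ (p - 3 - β)) * ‖y‖ ^ (p + 1 + β) := by
            have m1 : CB * (η ^ (p - 3 - β) * ‖y‖ ^ (p + 1 + β))
                ≤ C * (η ^ (p - 3 - β) * ‖y‖ ^ (p + 1 + β)) :=
              mul_le_mul_of_nonneg_right
                (by rw [hCdef]; linarith only [hC10, hC20, hC30])
                (mul_nonneg hX10 hY0)
            have k2 : 0 ≤ C * ‖y‖ ^ (p + 1 + β) := mul_nonneg hC0.le hY0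
            have k3 : 0 ≤ C * (η ^ (p - 3) * ‖y‖ ^ (p + 1 + β)) :=
              mul_nonneg hC0.le (mul_nonneg hX20 hY0)
            linarith only [m1, k2, k3]
  -- final assembly
  have hS : DyOp p φ x y = (Jp p (a + u) + Jp p (-(a - v))) / ‖y‖ ^ p := by
    unfold DyOp
    rw [show φ (x + y) - φ x = a + u by rw [hudef]; ring,
      show φ (x - y) - φ x = -(a - v) by rw [hvdef]; ring]
  have hyp0 : (0:ℝ) < ‖y‖ ^ p := Real.rpow_pos_of_pos ht0 p
  have hDy : DyOp p φ x y - (p - 1) / ‖y‖ ^ p * |a| ^ (p - 2) * q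
      = (Jp p (a + u) - Jp p (a - v) - (p - 1) * |a| ^ (p - 2) * q) / ‖y‖ ^ p := by
    rw [hS, Jp_neg]
    field_simp
    ring
  rw [hinn, hDy, abs_div, abs_of_pos hyp0, div_le_iff₀ hyp0]
  calc |Jp p (a + u) - Jp p (a - v) - (p - 1) * |a| ^ (p - 2) * q|
      ≤ C * (1 + η ^ (p - 3) + η ^ (p - 3 - β)) * ‖y‖ ^ (p + 1 + β) := hmain
    _ = C * (1 + η ^ (p - 3) + η ^ (p - 3 - β)) * ‖y‖ ^ (1 + β) * ‖y‖ ^ p := by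
        rw [show p + 1 + β = (1 + β) + p by ring, Real.rpow_add ht0]
        ring
end
end
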